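/- arXiv:math/0611070 — 7 statements merged into one kernel-verified Lean document; each statement's English description precedes it below -/
import Mathlib

section
/- Let a < b be positive integers and n a positive integer. A graph G has the property that G − V' has an [a,b]-factor for every n-subset V' ⊆ V(G) if and only if for every S ⊆ V(G) with |S| ≥ n, δ_G(a,b;S) := b|S| − a|T| + d_{G−S}(T) ≥ bn, where T = {x ∈ V(G) − S : d_{G−S}(x) ≤ a−1}. -/
open Finset
open scoped Classical

/-- Degree of a vertex in a simple graph (as `Set.ncard` of its neighbor set). -/
noncomputable def deg {W : Type*} (G : SimpleGraph W) (v : W) : ℕ := (G.neighborSet v).ncard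

/-- `G` has an `[a,b]`-factor: a spanning subgraph `H ≤ G` with `a ≤ deg_H v ≤ b` for all `v`. -/
def HasABFactor {W : Type*} (G : SimpleGraph W) (a b : ℕ) : Prop :=
  ∃ H : SimpleGraph W, H ≤ G ∧ ∀ v, a ≤ deg H v ∧ deg H v ≤ b

/-- Degree of `x` in `G - S` (neighbors of `x` outside `S`). -/
noncomputable def degS {W : Type*} (G : SimpleGraph W) (S : Set W) (x : W) : ℕ :=
  (G.neighborSet x \ S).ncard

/-- Number of isolated vertices of `G - S`. -/
noncomputable def nIso {W : Type*} (G : SimpleGraph W) (S : Set W) : ℕ :=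
  {x | x ∉ S ∧ degS G S x = 0}.ncard

/-- `d_{G-S}(T)`: sum of degrees in `G - S` of the vertices of `T`. -/
noncomputable def dSum {W : Type*} (G : SimpleGraph W) (S T : Set W) : ℕ :=
  ∑ᶠ x ∈ T, degS G S x

/-- `T = {x ∈ V(G) - S : d_{G-S}(x) ≤ a - 1}`. -/
def Tset {W : Type*} (G : SimpleGraph W) (S : Set W) (a : ℕ) : Set W :=
  {x | x ∉ S ∧ degS G S x ≤ a - 1}

/-- Isolated toughness of a graph. -/
noncomputable def isoT {W : Type*} [Fintype W] (G : SimpleGraph W) : ℝ :=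
  if G = ⊤ then (Fintype.card W : ℝ) - 1
  else sInf {r : ℝ | ∃ S : Set W, 2 ≤ nIso G S ∧ r = (S.ncard : ℝ) / (nIso G S : ℝ)}

/-!
Deleting `V'` shifts `δ` by exactly `b |V'|`, namely `δ_{G-V'}(S') = δ_G(V' ∪ S') - b |V'|`, so
the theorem reduces to the criterion: for `a < b`, `G` has an `[a,b]`-factor iff `δ_G(S) ≥ 0` for
all `S`.

Necessity is double counting of the edges of the factor between `T` and `S`. For sufficiency take
`H ≤ G` of maximum degree `≤ b` maximising first `∑ min(a, d_H)` and then the number of edges. If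
some `d_H(w) < a`, follow the walks from `w` alternating between edges of `G - H` and edges of `H`.
Maximality forces `d_H = b` at the ends of `G - H` steps, and a one-edge exchange (induction on the
length of the walk) forces `d_H ≤ a` at the ends of `H` steps. The latter lie in `T` for `S` the set
of the former, and counting as in the necessity part gives `δ_G(S) < 0`.
-/

lemma Set.ncard_setOf_eq_card_filter {α : Type*} [Fintype α] (p : α → Prop) [DecidablePred p] :
    {q | p q}.ncard = #{q | p q} := by
  rw [Set.ncard_eq_toFinset_card', Set.toFinset_ofPred]

namespace SimpleGraph

variable {V : Type*} {G H K : SimpleGraph V} {a b : ℕ}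

section Degree

variable [Fintype V]

lemma deg_eq_card (H : SimpleGraph V) (v : V) : deg H v = #{q | H.Adj v q} :=
  Set.ncard_setOf_eq_card_filter _

lemma degS_eq_card (G : SimpleGraph V) (S : Set V) (x : V) :
    degS G S x = #{q | G.Adj x q ∧ q ∉ S} :=
  Set.ncard_setOf_eq_card_filter (fun q => G.Adj x q ∧ q ∉ S)

lemma deg_mono (h : H ≤ K) (v : V) : deg H v ≤ deg K v := by
  simp only [deg_eq_card]
  exact card_le_card (monotone_filter_right _ fun q _ hq => h hq)

lemma degS_mono (h : H ≤ K) (S : Set V) (x : V) : degS H S x ≤ degS K S x := by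
  simp only [degS_eq_card]
  exact card_le_card (monotone_filter_right _ fun q _ hq => ⟨h hq.1, hq.2⟩)

lemma deg_eq_degS_add (H : SimpleGraph V) (S : Finset V) (x : V) :
    deg H x = degS H S x + #{q ∈ S | H.Adj x q} := by
  have hS : {q ∈ S | H.Adj x q} = univ.filter fun q => H.Adj x q ∧ q ∈ S := by
    ext; simp [and_comm]
  rw [deg_eq_card, degS_eq_card, hS, add_comm,
    ← card_filter_add_card_filter_not (s := univ.filter (H.Adj x)) (· ∈ S)]
  simp only [filter_filter, Finset.mem_coe]

lemma deg_sup_of_disjoint (h : Disjoint H K) (v : V) : deg (H ⊔ K) v = deg H v + deg K v := by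
  simp only [deg_eq_card, sup_adj, filter_or]
  refine card_union_of_disjoint (disjoint_filter.2 fun q _ hH hK => ?_)
  exact (disjoint_iff.1 h ▸ (⟨hH, hK⟩ : (H ⊓ K).Adj v q) : (⊥ : SimpleGraph V).Adj v q)

lemma deg_edge {s t : V} (hst : s ≠ t) (v : V) :
    deg (edge s t) v = if v ∈ s(s, t) then 1 else 0 := by
  rw [deg_eq_card]
  split_ifs with hv
  · rcases Sym2.mem_iff.1 hv with rfl | rfl
    · refine card_eq_one.2 ⟨t, ?_⟩
      ext q; simp only [mem_filter, mem_univ, true_and, edge_adj, mem_singleton]; grind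
    · refine card_eq_one.2 ⟨s, ?_⟩
      ext q; simp only [mem_filter, mem_univ, true_and, edge_adj, mem_singleton]; grind
  · refine card_eq_zero.2 (eq_empty_of_forall_notMem fun q hq => ?_)
    simp only [mem_filter, edge_adj, Sym2.mem_iff] at hv hq
    grind

lemma deg_sup_edge {s t : V} (hst : s ≠ t) (h : ¬H.Adj s t) (v : V) :
    deg (H ⊔ edge s t) v = deg H v + if v ∈ s(s, t) then 1 else 0 := by
  rw [deg_sup_of_disjoint ((disjoint_edge _).2 h), deg_edge hst]

lemma deg_sdiff_edge {s t : V} (h : H.Adj s t) (v : V) :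
    deg (H \ edge s t) v + (if v ∈ s(s, t) then 1 else 0) = deg H v := by
  rw [← deg_edge h.ne, ← deg_sup_of_disjoint disjoint_sdiff_self_left,
    sdiff_sup_cancel ((edge_le_iff _).2 (Or.inr h))]

lemma deg_swap {u x y : V} (hux : H.Adj u x) (huy : ¬H.Adj u y) (hne : u ≠ y) (v : V) :
    deg (H \ edge u x ⊔ edge u y) v + (if v ∈ s(u, x) then 1 else 0)
      = deg H v + if v ∈ s(u, y) then 1 else 0 := by
  rw [deg_sup_edge (H := H \ edge u x) hne (fun h => huy h.1), add_right_comm,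
    deg_sdiff_edge hux]

lemma deg_swap_right {u x y : V} (hux : H.Adj u x) (huy : ¬H.Adj u y) (hne : u ≠ y)
    (hxy : x ≠ y) : deg (H \ edge u x ⊔ edge u y) y = deg H y + 1 := by
  simpa [hne.symm, hxy.symm] using deg_swap hux huy hne y

lemma sum_ite_mem_sym2 {s t : V} (hst : s ≠ t) : ∑ v, (if v ∈ s(s, t) then 1 else 0) = 2 := by
  rw [sum_boole, Nat.cast_id, ← card_pair hst]
  congr 1
  ext v
  simp

end Degree

section Counting

lemma sum_card_filter_adj_comm (H : SimpleGraph V) (S T : Finset V) :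
    ∑ x ∈ T, #{q ∈ S | H.Adj x q} = ∑ u ∈ S, #{z ∈ T | H.Adj u z} := by
  have := sum_card_bipartiteAbove_eq_sum_card_bipartiteBelow (s := T) (t := S) (r := H.Adj)
  simpa [bipartiteAbove, bipartiteBelow, adj_comm] using this

variable [Fintype V]

lemma card_filter_adj_le_deg (H : SimpleGraph V) (T : Finset V) (u : V) :
    #{z ∈ T | H.Adj u z} ≤ deg H u := by
  rw [deg_eq_card]
  exact card_le_card (filter_subset_filter _ (subset_univ T))

lemma card_filter_adj_eq_deg {T : Finset V} {u : V} (h : ∀ z, H.Adj u z → z ∈ T) :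
    #{z ∈ T | H.Adj u z} = deg H u := by
  rw [deg_eq_card]
  congr 1
  ext z
  simpa using h z

lemma card_mul_le_of_le_deg (hHG : H ≤ G) (hlo : ∀ v, a ≤ deg H v) (hup : ∀ v, deg H v ≤ b)
    (S T : Finset V) : a * #T ≤ b * #S + ∑ x ∈ T, degS G S x :=
  calc a * #T = ∑ _x ∈ T, a := by rw [sum_const, smul_eq_mul, mul_comm]
    _ ≤ ∑ x ∈ T, deg H x := sum_le_sum fun x _ => hlo x
    _ = ∑ x ∈ T, degS H S x + ∑ x ∈ T, #{q ∈ S | H.Adj x q} := by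
      rw [← sum_add_distrib]
      exact sum_congr rfl fun x _ => deg_eq_degS_add H S x
    _ ≤ ∑ x ∈ T, degS G S x + ∑ u ∈ S, deg H u := by
      rw [sum_card_filter_adj_comm]
      gcongr with x _ u _
      · exact degS_mono hHG _ x
      · exact card_filter_adj_le_deg H T u
    _ ≤ ∑ x ∈ T, degS G S x + ∑ _u ∈ S, b := by gcongr with u _; exact hup u
    _ = b * #S + ∑ x ∈ T, degS G S x := by rw [sum_const, smul_eq_mul, add_comm, mul_comm]

lemma degS_add_card_eq_deg (hHG : H ≤ G) {S : Finset V} {x : V}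
    (h : ∀ q ∉ S, G.Adj x q → H.Adj x q) : degS G S x + #{q ∈ S | H.Adj x q} = deg H x := by
  rw [deg_eq_degS_add H S x, degS_eq_card, degS_eq_card]
  congr 2
  ext q
  simp only [mem_filter, mem_univ, true_and, Finset.mem_coe]
  exact ⟨fun hq => ⟨h q hq.2 hq.1, hq.2⟩, fun hq => ⟨hHG hq.1, hq.2⟩⟩

lemma subset_toFinset_Tset (hHG : H ≤ G) {S X : Finset V} (hX : ∀ x ∈ X, deg H x ≤ a)
    (hXS : ∀ x ∈ X, ∀ q ∉ S, G.Adj x q → H.Adj x q) (hS : ∀ x ∈ X, x ∉ S)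
    (hroot : ∀ x ∈ X, deg H x < a ∨ ∃ u ∈ S, H.Adj x u) : X ⊆ (Tset G S a).toFinset := by
  intro x hx
  have hdeg := degS_add_card_eq_deg hHG (hXS x hx)
  have := hX x hx
  refine Set.mem_toFinset.2 ⟨by simpa using hS x hx, ?_⟩
  rcases hroot x hx with hxa | ⟨u, hu, hxu⟩
  · omega
  · have : 0 < #{q ∈ S | H.Adj x q} := card_pos.2 ⟨u, mem_filter.2 ⟨hu, hxu⟩⟩
    omega

lemma card_mul_lt_of_alternating (hHG : H ≤ G) {S X T : Finset V} (hXT : X ⊆ T)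
    (hT : ∀ x ∈ T, degS G S x < a) (hX : ∀ x ∈ X, deg H x ≤ a) (hS : ∀ u ∈ S, deg H u = b)
    (hXS : ∀ x ∈ X, ∀ q ∉ S, G.Adj x q → H.Adj x q) (hSX : ∀ u ∈ S, ∀ z, H.Adj u z → z ∈ X)
    (hw : ∃ w ∈ X, deg H w < a) : b * #S + ∑ x ∈ T, degS G S x < a * #T := by
  obtain ⟨w, hwX, hw⟩ := hw
  suffices b * #S + ∑ x ∈ T, degS G S x + 1 ≤ a * #T by omega
  calc b * #S + ∑ x ∈ T, degS G S x + 1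
      = ∑ x ∈ T, degS G S x + (1 + ∑ x ∈ X, #{q ∈ S | H.Adj x q}) := by
        rw [sum_card_filter_adj_comm, sum_congr rfl fun u hu => card_filter_adj_eq_deg (hSX u hu),
          sum_congr rfl hS, sum_const, smul_eq_mul]
        ring
    _ ≤ ∑ x ∈ T, degS G S x + (∑ x ∈ X, (a - deg H x) + ∑ x ∈ X, #{q ∈ S | H.Adj x q}) := by
      gcongr
      exact (Nat.sub_pos_of_lt hw).trans_le
        (single_le_sum (f := fun x => a - deg H x) (fun x _ => Nat.zero_le _) hwX)
    _ = ∑ x ∈ T, degS G S x + ∑ x ∈ X, (a - degS G S x) := by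
      rw [← sum_add_distrib]
      congr 1
      refine sum_congr rfl fun x hx => ?_
      have := degS_add_card_eq_deg hHG (hXS x hx)
      have := hX x hx
      omega
    _ ≤ ∑ x ∈ T, degS G S x + ∑ x ∈ T, (a - degS G S x) := by gcongr
    _ = a * #T := by
      rw [← sum_add_distrib, sum_congr rfl fun x hx => Nat.add_sub_cancel' (hT x hx).le,
        sum_const, smul_eq_mul, mul_comm]

end Counting

section Optimal

variable [Fintype V]

noncomputable def potential (a : ℕ) (H : SimpleGraph V) : ℕ ×ₗ ℕ :=
  toLex (∑ v, min a (deg H v), ∑ v, deg H v)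

structure IsOptimal (G : SimpleGraph V) (a b : ℕ) (H : SimpleGraph V) : Prop where
  le : H ≤ G
  deg_le : ∀ v, deg H v ≤ b
  potential_le : ∀ K ≤ G, (∀ v, deg K v ≤ b) → potential a K ≤ potential a H

lemma exists_isOptimal (G : SimpleGraph V) (a b : ℕ) : ∃ H, IsOptimal G a b H := by
  obtain ⟨H, ⟨hHG, hH⟩, hmax⟩ := Set.exists_max_image {K | K ≤ G ∧ ∀ v, deg K v ≤ b}
    (potential a) (Set.toFinite _) ⟨⊥, bot_le, fun v => by simp [deg]⟩
  exact ⟨H, hHG, hH, fun K hK hKb => hmax K ⟨hK, hKb⟩⟩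

namespace IsOptimal

variable {u x y : V}

lemma deg_eq_of_not_adj (hab : a < b) (hH : IsOptimal G a b H) (hy : deg H y ≤ a)
    (hyu : G.Adj y u) (hn : ¬H.Adj y u) : deg H u = b := by
  by_contra hne
  have hu : deg H u < b := (hH.deg_le u).lt_of_ne hne
  have hdeg := deg_sup_edge hyu.ne hn
  have hK : ∀ v, deg (H ⊔ edge y u) v ≤ b := fun v => by
    have := hH.deg_le v
    rw [hdeg]
    split_ifs with hv
    · rcases Sym2.mem_iff.1 hv with rfl | rfl <;> omega
    · omega
  refine (hH.potential_le _ (sup_le hH.le ((edge_le_iff _).2 (Or.inr hyu))) hK).not_gt ?_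
  refine Prod.Lex.toLex_strictMono (Prod.mk_lt_mk_of_le_of_lt ?_ ?_)
  · gcongr with v
    exact deg_mono le_sup_left v
  · exact sum_lt_sum (fun v _ => deg_mono le_sup_left v) ⟨y, mem_univ _, by simp [hdeg]⟩

lemma isOptimal_swap (hab : a < b) (hH : IsOptimal G a b H) (hux : H.Adj u x)
    (hyu : G.Adj y u) (hnyu : ¬H.Adj y u) (hx : a < deg H x) (hy : deg H y ≤ a) :
    deg H y = a ∧ IsOptimal G a b (H \ edge u x ⊔ edge u y) := by
  have hu := hH.deg_eq_of_not_adj hab hy hyu hnyu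
  have hdeg := deg_swap hux (fun h => hnyu h.symm) hyu.ne.symm
  have hKG : H \ edge u x ⊔ edge u y ≤ G :=
    sup_le (sdiff_le.trans hH.le) ((edge_le_iff _).2 (Or.inr hyu.symm))
  have hKb : ∀ v, deg (H \ edge u x ⊔ edge u y) v ≤ b := fun v => by
    have := hH.deg_le v
    have := hdeg v
    simp only [Sym2.mem_iff] at this
    split_ifs at this <;> grind
  have hmin : ∀ v, min a (deg H v) ≤ min a (deg (H \ edge u x ⊔ edge u y) v) := fun v => by
    have := hdeg v
    simp only [Sym2.mem_iff] at this
    split_ifs at this <;> grind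
  have hsum : ∑ v, deg (H \ edge u x ⊔ edge u y) v = ∑ v, deg H v := by
    have := congrArg (fun f : V → ℕ => ∑ v, f v) (funext hdeg)
    simp only [sum_add_distrib, sum_ite_mem_sym2 hux.ne, sum_ite_mem_sym2 hyu.ne.symm] at this
    omega
  have hle := hH.potential_le _ hKG hKb
  refine ⟨hy.antisymm (not_lt.1 fun hya => hle.not_gt ?_), hKG, hKb,
    fun K hK hKb' => (hH.potential_le K hK hKb').trans ?_⟩
  · refine Prod.Lex.toLex_strictMono (Prod.mk_lt_mk_of_lt_of_le ?_ hsum.ge)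
    refine sum_lt_sum (fun v _ => hmin v) ⟨y, mem_univ _, ?_⟩
    rw [deg_swap_right hux (fun h => hnyu h.symm) hyu.ne.symm (by rintro rfl; omega)]
    omega
  · exact Prod.Lex.toLex_mono ⟨sum_le_sum fun v _ => hmin v, hsum.ge⟩

end IsOptimal

end Optimal

section Alternating

inductive AltReach (G H : SimpleGraph V) (a : ℕ) : ℕ → Bool → V → Prop
  | root {w : V} : deg H w < a → AltReach G H a 0 false w
  | out {k : ℕ} {y u : V} : AltReach G H a k false y → G.Adj y u → ¬H.Adj y u →
      AltReach G H a (k + 1) true u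
  | back {k : ℕ} {u x : V} : AltReach G H a k true u → H.Adj u x →
      AltReach G H a (k + 1) false x

variable [Fintype V]

lemma AltReach.swap {u x y : V} {j m : ℕ} {p : Bool} {z : V} (hux : H.Adj u x)
    (hyu : G.Adj y u) (hnyu : ¬H.Adj y u) (hx : a < deg H x) (hu : a < deg H u)
    (hy : a ≤ deg H y) (hle : ∀ m ≤ j + 1, ∀ z, AltReach G H a m false z → deg H z ≤ a)
    (h : AltReach G H a m p z) (hm : m ≤ j) :
    AltReach G (H \ edge u x ⊔ edge u y) a m p z := by
  induction h with
  | @root w hw =>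
    refine .root ?_
    have := deg_swap hux (fun h => hnyu h.symm) hyu.ne.symm w
    simp only [Sym2.mem_iff] at this
    split_ifs at this <;> grind
  | @out k y' u' hd hG hn ih =>
    refine .out (ih (by omega)) hG ?_
    simp only [sup_adj, sdiff_adj, edge_adj]
    rintro (⟨h, -⟩ | ⟨⟨rfl, rfl⟩ | ⟨rfl, rfl⟩, -⟩)
    · exact hn h
    · exact (hle k (by omega) _ hd).not_gt hu
    · exact (hle (k + 2) (by omega) x (.back (.out hd hyu hnyu) hux)).not_gt hx
  | @back k u' x' hd hH ih =>
    refine .back (ih (by omega)) ?_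
    simp only [sup_adj, sdiff_adj, edge_adj]
    refine .inl ⟨hH, ?_⟩
    rintro ⟨⟨rfl, rfl⟩ | ⟨rfl, rfl⟩, -⟩
    · exact (hle (k + 1) (by omega) _ (.back hd hH)).not_gt hx
    · exact (hle (k + 1) (by omega) _ (.back hd hH)).not_gt hu

namespace IsOptimal

lemma deg_le_of_altReach (hab : a < b) (hH : IsOptimal G a b H) {k : ℕ} {x : V}
    (hx : AltReach G H a k false x) : deg H x ≤ a := by
  induction k using Nat.strong_induction_on generalizing H x with
  | _ k ih =>
    rcases hx with hw | _ | ⟨hu, hux⟩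
    · exact hw.le
    rcases hu with _ | @⟨j, _, _, hy, hyu, hnyu⟩
    by_contra! hxa
    have hyle := ih j (by omega) hH hy
    -- Exchanging `ux` for `uy` keeps `H` optimal, and turns `y` into a vertex of degree `a + 1`
    -- reached by a shorter alternating walk.
    obtain ⟨hya, hK⟩ := hH.isOptimal_swap hab hux hyu hnyu hxa hyle
    have hub := hH.deg_eq_of_not_adj hab hyle hyu hnyu
    have hyK := hy.swap hux hyu hnyu hxa (by omega) hya.ge
      (fun m hm z hz => ih m (by omega) hH hz) le_rfl
    have := ih j (by omega) hK hyK
    rw [deg_swap_right hux (fun h => hnyu h.symm) hyu.ne.symm (by rintro rfl; omega)] at this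
    omega

lemma deg_eq_of_altReach (hab : a < b) (hH : IsOptimal G a b H) {k : ℕ} {u : V}
    (h : AltReach G H a k true u) : deg H u = b := by
  rcases h with _ | ⟨hy, hyu, hn⟩
  exact hH.deg_eq_of_not_adj hab (hH.deg_le_of_altReach hab hy) hyu hn

end IsOptimal

lemma hasABFactor_of_forall_card_le (hab : a < b)
    (h : ∀ S : Finset V, a * #(Tset G S a).toFinset
      ≤ b * #S + ∑ x ∈ (Tset G S a).toFinset, degS G S x) : HasABFactor G a b := by
  obtain ⟨H, hH⟩ := exists_isOptimal G a b
  by_contra hno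
  obtain ⟨w, hw⟩ : ∃ w, deg H w < a := by
    by_contra! hlo
    exact hno ⟨H, hH.le, fun v => ⟨hlo v, hH.deg_le v⟩⟩
  let S : Finset V := {u | ∃ k, AltReach G H a k true u}
  let X : Finset V := {x | ∃ k, AltReach G H a k false x}
  have hS : ∀ u ∈ S, deg H u = b := by
    simp only [S, mem_filter, mem_univ, true_and]
    exact fun u ⟨k, hk⟩ => hH.deg_eq_of_altReach hab hk
  have hX : ∀ x ∈ X, deg H x ≤ a := by
    simp only [X, mem_filter, mem_univ, true_and]
    exact fun x ⟨k, hk⟩ => hH.deg_le_of_altReach hab hk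
  have hXS : ∀ x ∈ X, ∀ q ∉ S, G.Adj x q → H.Adj x q := by
    simp only [X, S, mem_filter, mem_univ, true_and, not_exists]
    exact fun x ⟨k, hk⟩ q hq hG => by_contra fun hn => hq _ (.out hk hG hn)
  have hSX : ∀ u ∈ S, ∀ z, H.Adj u z → z ∈ X := by
    simp only [X, S, mem_filter, mem_univ, true_and]
    exact fun u ⟨k, hk⟩ z hz => ⟨_, .back hk hz⟩
  have hXT : X ⊆ (Tset G S a).toFinset := by
    refine subset_toFinset_Tset hH.le hX hXS (fun x hx hxS => (hX x hx).not_gt ?_) ?_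
    · rw [hS x hxS]; exact hab
    · simp only [X, S, mem_filter, mem_univ, true_and]
      rintro x ⟨k, hw | _ | ⟨hu, hux⟩⟩
      · exact .inl hw
      · exact .inr ⟨_, ⟨_, hu⟩, hux.symm⟩
  refine (h S).not_gt (card_mul_lt_of_alternating hH.le hXT (fun x hx => ?_) hX hS hXS hSX
    ⟨w, by simpa [X] using ⟨0, .root hw⟩, hw⟩)
  have := (Set.mem_toFinset.1 hx).2
  omega

end Alternating

section Delta

noncomputable def delta (G : SimpleGraph V) (a b : ℕ) (S : Set V) : ℤ :=
  b * S.ncard - a * (Tset G S a).ncard + dSum G S (Tset G S a)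

lemma le_delta_iff (G : SimpleGraph V) (a b n : ℕ) (S : Set V) :
    (b * n : ℤ) ≤ G.delta a b S ↔
      a * (Tset G S a).ncard + b * n ≤ b * S.ncard + dSum G S (Tset G S a) := by
  rw [delta]
  omega

lemma degS_induce_compl (G : SimpleGraph V) (V' : Set V) (S' : Set ↥V'ᶜ) (x : ↥V'ᶜ) :
    degS (G.induce V'ᶜ) S' x = degS G (V' ∪ Subtype.val '' S') x := by
  rw [degS, degS, ← Set.ncard_image_of_injective _ Subtype.val_injective]
  congr 1
  ext q
  simp only [Set.mem_image, Set.mem_sdiff, mem_neighborSet, comap_adj,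
    Function.Embedding.subtype_apply, Set.mem_union, Subtype.exists, Set.mem_compl_iff,
    exists_and_right, exists_eq_right, not_or, not_exists]
  exact ⟨fun ⟨hq, hG, hS⟩ => ⟨hG, hq, fun _ => hS⟩, fun ⟨hG, hq, hS⟩ => ⟨hq, hG, hS hq⟩⟩

lemma image_val_Tset_induce_compl (G : SimpleGraph V) (a : ℕ) (V' : Set V) (S' : Set ↥V'ᶜ) :
    Subtype.val '' Tset (G.induce V'ᶜ) S' a = Tset G (V' ∪ Subtype.val '' S') a := by
  ext q
  simp only [Tset, Set.mem_image, Set.mem_ofPred_eq, Set.mem_union, not_or, Subtype.exists,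
    Set.mem_compl_iff, exists_and_right, exists_eq_right, not_exists, degS_induce_compl]
  exact and_congr_left' ⟨fun ⟨hq, hS⟩ => ⟨hq, fun _ => hS⟩, fun ⟨hq, hS⟩ => ⟨hq, hS hq⟩⟩

variable [Fintype V]

lemma delta_eq_sum (G : SimpleGraph V) (a b : ℕ) (S : Set V) :
    G.delta a b S = b * #S.toFinset - a * #(Tset G S a).toFinset
      + ∑ x ∈ (Tset G S a).toFinset, degS G S x := by
  rw [delta, dSum, finsum_mem_eq_toFinset_sum, Set.ncard_eq_toFinset_card',
    Set.ncard_eq_toFinset_card', Nat.cast_sum]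

lemma delta_nonneg_of_hasABFactor (h : HasABFactor G a b) (S : Set V) : 0 ≤ G.delta a b S := by
  obtain ⟨H, hHG, hH⟩ := h
  have := card_mul_le_of_le_deg hHG (fun v => (hH v).1) (fun v => (hH v).2) S.toFinset
    (Tset G S a).toFinset
  rw [Set.coe_toFinset] at this
  rw [delta_eq_sum]
  omega

theorem hasABFactor_iff_forall_delta_nonneg (hab : a < b) :
    HasABFactor G a b ↔ ∀ S, 0 ≤ G.delta a b S := by
  refine ⟨delta_nonneg_of_hasABFactor, fun h => hasABFactor_of_forall_card_le hab fun S => ?_⟩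
  have := h S
  rw [delta_eq_sum, Finset.toFinset_coe] at this
  omega

lemma delta_induce_compl (G : SimpleGraph V) (a b : ℕ) (V' : Set V) (S' : Set ↥V'ᶜ) :
    (G.induce V'ᶜ).delta a b S' + b * V'.ncard = G.delta a b (V' ∪ Subtype.val '' S') := by
  have hdisj : Disjoint V' (Subtype.val '' S') :=
    Set.disjoint_left.2 fun q hq ⟨q', _, hq'⟩ => q'.2 (hq' ▸ hq)
  rw [delta, delta, ← image_val_Tset_induce_compl, dSum, dSum,
    Set.ncard_image_of_injective _ Subtype.val_injective,
    finsum_mem_image Subtype.val_injective.injOn, Set.ncard_union_eq hdisj,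
    Set.ncard_image_of_injective _ Subtype.val_injective]
  simp only [degS_induce_compl]
  push_cast
  ring

end Delta

end SimpleGraph

open SimpleGraph in
theorem stmt_2_general {V : Type*} [Fintype V] (G : SimpleGraph V) (a b n : ℕ)
    (hab : a < b) :
    (∀ V' : Set V, V'.ncard = n → HasABFactor (SimpleGraph.induce V'ᶜ G) a b) ↔
      ∀ S : Set V, n ≤ S.ncard →
        a * (Tset G S a).ncard + b * n ≤ b * S.ncard + dSum G S (Tset G S a) := by
  have hshift (V' : Set V) : HasABFactor (G.induce V'ᶜ) a b ↔
      ∀ S' : Set ↥V'ᶜ, (b * V'.ncard : ℤ) ≤ G.delta a b (V' ∪ Subtype.val '' S') := by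
    rw [hasABFactor_iff_forall_delta_nonneg hab]
    refine forall_congr' fun S' => ?_
    rw [← delta_induce_compl]
    omega
  simp_rw [hshift, ← le_delta_iff]
  constructor
  · intro h S hS
    obtain ⟨V', hV'S, rfl⟩ := Set.exists_subset_card_eq hS
    have := h V' rfl (Subtype.val ⁻¹' S)
    rwa [Subtype.image_preimage_coe, Set.union_inter_distrib_left, Set.union_compl_self,
      Set.univ_inter, Set.union_eq_right.2 hV'S] at this
  · rintro h V' rfl S'
    exact h _ (Set.ncard_le_ncard Set.subset_union_left)

theorem stmt_2 {V : Type*} [Fintype V] (G : SimpleGraph V) (a b n : ℕ)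
    (ha : 1 ≤ a) (hab : a < b) (hn : 1 ≤ n) :
    (∀ V' : Set V, V'.ncard = n → HasABFactor (SimpleGraph.induce V'ᶜ G) a b) ↔
      ∀ S : Set V, n ≤ S.ncard →
        a * (Tset G S a).ncard + b * n ≤ b * S.ncard + dSum G S (Tset G S a) :=
  stmt_2_general G a b n hab
end

section
/- For positive integers m ≥ 1, a ≥ 2, b > a, n ≥ 1, consider the graph H with vertex set V(K_{m(a−1)}) ∪ {v_1,...,v_{mb+1}} ∪ V(K_{(mb+1)(a−1+n)}), where all edges inside the two cliques are present, every v_i is joined to all vertices of K_{m(a−1)}, and each v_i is joined to a distinct vertex u_i of K_{(mb+1)(a−1+n)}. Then for any n-subset V_0 of V(K_{(mb+1)(a−1+n)}) \ {u_1,...,u_{mb+1}}, the graph H − V_0 has no [a,b]-factor. -/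
open Finset
open scoped Classical

/-- Vertex set of the extremal graph `H`. -/
abbrev HV (m a b n : ℕ) : Type :=
  Fin (m * (a - 1)) ⊕ Fin (m * b + 1) ⊕ Fin ((m * b + 1) * (a - 1 + n))

/-- Defining relation of the extremal graph `H`: two cliques, the `v_i` joined to all of the
first clique, and `v_i` joined to `u_i` (the vertex of value `i` in the big clique). -/
def Hrel (m a b n : ℕ) : HV m a b n → HV m a b n → Prop
  | Sum.inl _, Sum.inl _ => True
  | Sum.inl _, Sum.inr (Sum.inl _) => True
  | Sum.inr (Sum.inl i), Sum.inr (Sum.inr j) => (j : ℕ) = (i : ℕ)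
  | Sum.inr (Sum.inr _), Sum.inr (Sum.inr _) => True
  | _, _ => False

/-- The extremal graph `H`. -/
def HGraph (m a b n : ℕ) : SimpleGraph (HV m a b n) := SimpleGraph.fromRel (Hrel m a b n)

/-!
Each `v_i` has at most one neighbour outside the clique `K_{m(a-1)}`, so in an `[a,b]`-factor it
sends at least `a - 1` edges into that clique, i.e. at least `(mb+1)(a-1)` edges in total. Each
vertex of the clique receives at most `b` of them, i.e. at most `m(a-1)b < (mb+1)(a-1)` in total.
-/

namespace SimpleGraph

variable {W : Type*}

theorem deg_eq_degree (G : SimpleGraph W) (v : W) [Fintype (G.neighborSet v)] :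
    deg G v = G.degree v := by
  rw [deg, Set.ncard_eq_toFinset_card', ← card_neighborSet_eq_degree, Set.toFinset_card]

theorem degree_le_card_filter_adj_add_one [Fintype W] (G : SimpleGraph W) [DecidableRel G.Adj]
    {v : W} (t : Finset W) (h : {w | G.Adj v w ∧ w ∉ t}.Subsingleton) :
    G.degree v ≤ (t.filter (G.Adj v)).card + 1 := by
  have houtside : ((G.neighborFinset v).filter (· ∉ t)).card ≤ 1 :=
    Finset.card_le_one.2 fun x hx y hy => by
      simp only [Finset.mem_filter, mem_neighborFinset] at hx hy
      exact h hx hy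
  have hinside : (G.neighborFinset v).filter (· ∈ t) ⊆ t.filter (G.Adj v) := fun x hx => by
    simp only [Finset.mem_filter, mem_neighborFinset] at hx ⊢
    exact ⟨hx.2, hx.1⟩
  rw [← card_neighborFinset_eq_degree,
    ← Finset.card_filter_add_card_filter_not (s := G.neighborFinset v) (· ∈ t)]
  have := Finset.card_le_card hinside
  omega

theorem not_hasABFactor_of_card_mul_lt [Fintype W] (G : SimpleGraph W) {a b : ℕ}
    (s t : Finset W) (hs : ∀ v ∈ s, {w | G.Adj v w ∧ w ∉ t}.Subsingleton)
    (hlt : t.card * b < s.card * (a - 1)) : ¬ HasABFactor G a b := by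
  rintro ⟨F, hFG, hdeg⟩
  have hlow : ∀ v ∈ s, a - 1 ≤ (t.bipartiteAbove F.Adj v).card := fun v hv => by
    have hF := F.degree_le_card_filter_adj_add_one t
      ((hs v hv).anti fun w hw => ⟨hFG hw.1, hw.2⟩)
    have := (hdeg v).1
    rw [deg_eq_degree] at this
    rw [Finset.bipartiteAbove]
    convert Nat.sub_le_of_le_add (this.trans hF) using 2
  have hup : ∀ w ∈ t, (s.bipartiteBelow F.Adj w).card ≤ b := fun w _ => by
    have hsub : s.bipartiteBelow F.Adj w ⊆ F.neighborFinset w := fun v hv => by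
      rw [Finset.mem_bipartiteBelow] at hv
      exact (mem_neighborFinset _ _ _).2 hv.2.symm
    have := (hdeg w).2
    rw [deg_eq_degree, ← card_neighborFinset_eq_degree] at this
    exact (Finset.card_le_card hsub).trans this
  exact hlt.not_ge (Finset.card_mul_le_card_mul _ hlow hup)

end SimpleGraph

theorem HGraph_adj_inr_inl_isRight_subsingleton (m a b n : ℕ) (i : Fin (m * b + 1)) :
    {w | (HGraph m a b n).Adj (Sum.inr (Sum.inl i)) w ∧ w.isRight}.Subsingleton := by
  have key : ∀ w, (HGraph m a b n).Adj (Sum.inr (Sum.inl i)) w → w.isRight →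
      ∃ j : Fin ((m * b + 1) * (a - 1 + n)), (j : ℕ) = i ∧ w = Sum.inr (Sum.inr j) := by
    rintro (k | k | j) hadj hr
    · simp at hr
    · simp [HGraph, Hrel] at hadj
    · simp only [HGraph, SimpleGraph.fromRel_adj, Hrel, or_false] at hadj
      exact ⟨j, hadj.2, rfl⟩
  rintro w ⟨hw, hwr⟩ w' ⟨hw', hwr'⟩
  obtain ⟨j, hj, rfl⟩ := key w hw hwr
  obtain ⟨j', hj', rfl⟩ := key w' hw' hwr'
  rw [Fin.ext (hj.trans hj'.symm)]

theorem stmt_4_general (m a b n : ℕ) (ha : 2 ≤ a)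
    (V0 : Set (HV m a b n))
    (hsub : ∀ x ∈ V0, ∃ j : Fin ((m * b + 1) * (a - 1 + n)),
      x = Sum.inr (Sum.inr j) ∧ m * b + 1 ≤ (j : ℕ)) :
    ¬ HasABFactor (SimpleGraph.induce V0ᶜ (HGraph m a b n)) a b := by
  have hA : ∀ k, (Sum.inl k : HV m a b n) ∈ V0ᶜ := fun k hk => by
    obtain ⟨j, hj, -⟩ := hsub _ hk
    simp at hj
  have hB : ∀ i, (Sum.inr (Sum.inl i) : HV m a b n) ∈ V0ᶜ := fun i hi => by
    obtain ⟨j, hj, -⟩ := hsub _ hi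
    simp at hj
  let vA : Fin (m * (a - 1)) ↪ ↥V0ᶜ := ⟨fun k => ⟨_, hA k⟩, fun k k' h => by simpa using h⟩
  let vB : Fin (m * b + 1) ↪ ↥V0ᶜ := ⟨fun i => ⟨_, hB i⟩, fun i i' h => by simpa using h⟩
  refine SimpleGraph.not_hasABFactor_of_card_mul_lt _ (Finset.univ.map vB) (Finset.univ.map vA)
    ?_ ?_
  · simp only [Finset.mem_map, Finset.mem_univ, true_and]
    rintro _ ⟨i, rfl⟩
    refine (HGraph_adj_inr_inl_isRight_subsingleton m a b n i).preimage Subtype.val_injective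
      |>.anti fun ⟨w, hw⟩ ⟨hadj, hwt⟩ => ⟨hadj, ?_⟩
    rcases w with k | w
    · exact absurd ⟨k, rfl⟩ hwt
    · rfl
  · have hexp : (m * b + 1) * (a - 1) = m * (a - 1) * b + (a - 1) := by ring
    simp only [Finset.card_map, Finset.card_univ, Fintype.card_fin]
    omega

theorem stmt_4 (m a b n : ℕ) (hm : 1 ≤ m) (ha : 2 ≤ a) (hab : a < b) (hn : 1 ≤ n)
    (V0 : Set (HV m a b n)) (hcard : V0.ncard = n)
    (hsub : ∀ x ∈ V0, ∃ j : Fin ((m * b + 1) * (a - 1 + n)),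
      x = Sum.inr (Sum.inr j) ∧ m * b + 1 ≤ (j : ℕ)) :
    ¬ HasABFactor (SimpleGraph.induce V0ᶜ (HGraph m a b n)) a b :=
  stmt_4_general m a b n ha V0 hsub
end

section
/- For the graph H defined as follows: take cliques K_{m(a−1)} and K_{(mb+1)(a−1+n)}, independent vertices v_1,...,v_{mb+1}, join every v_i to all vertices of K_{m(a−1)}, and join each v_i to a distinct vertex u_i in K_{(mb+1)(a−1+n)}; then the isolated toughness satisfies I(H) ≤ ((mb+1)(a−1+n) + m(a−1)) / (mb+1). -/
open Finset
open scoped Classical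

theorem stmt_5 (m a b n : ℕ) (hm : 1 ≤ m) (ha : 2 ≤ a) (hab : a < b) (hn : 1 ≤ n) :
    isoT (HGraph m a b n) ≤
      (((m * b + 1) * (a - 1 + n) + m * (a - 1) : ℕ) : ℝ) / ((m * b + 1 : ℕ) : ℝ) := by
  classical
  set G := HGraph m a b n with hG
  -- the set of v_i's
  set f : Fin (m * b + 1) → HV m a b n := fun i => Sum.inr (Sum.inl i) with hf
  have hfinj : Function.Injective f := by
    intro i j h
    simpa [hf] using h
  set S : Set (HV m a b n) := (Set.range f)ᶜ with hS
  have hcard2 : 2 ≤ m * b + 1 := by nlinarith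
  -- v_i are not adjacent to v_j
  have hnotadj : ∀ i j : Fin (m * b + 1), ¬ G.Adj (f i) (f j) := by
    intro i j h
    rcases h with ⟨_, h | h⟩ <;> exact h
  -- neighbors of f i avoid range f, so degS = 0
  have hdegS : ∀ i : Fin (m * b + 1), degS G S (f i) = 0 := by
    intro i
    have : G.neighborSet (f i) \ S = ∅ := by
      ext y
      simp only [Set.mem_diff, Set.mem_empty_iff_false, iff_false, hS, Set.mem_compl_iff,
        not_not, SimpleGraph.mem_neighborSet, not_and]
      rintro hadj ⟨j, rfl⟩
      exact hnotadj i j hadj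
    rw [degS, this, Set.ncard_empty]
  -- the isolated set is exactly range f
  have hisoSet : {x | x ∉ S ∧ degS G S x = 0} = Set.range f := by
    ext x
    simp only [Set.mem_setOf_eq, hS, Set.mem_compl_iff, not_not]
    constructor
    · exact fun h => h.1
    · rintro ⟨i, rfl⟩
      exact ⟨⟨i, rfl⟩, hdegS i⟩
  have hrange : (Set.range f).ncard = m * b + 1 := by
    rw [← Set.image_univ, Set.ncard_image_of_injective _ hfinj, Set.ncard_univ,
      Nat.card_eq_fintype_card, Fintype.card_fin]
  have hnIso : nIso G S = m * b + 1 := by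
    rw [nIso, hisoSet, hrange]
  have hScard : S.ncard = (m * b + 1) * (a - 1 + n) + m * (a - 1) := by
    have h1 := Set.ncard_add_ncard_compl (Set.range f)
    have h2 : Nat.card (HV m a b n) =
        m * (a - 1) + ((m * b + 1) + (m * b + 1) * (a - 1 + n)) := by
      simp [Nat.card_eq_fintype_card]
    rw [← hS, hrange] at h1
    omega
  -- G is not complete
  have hne : G ≠ ⊤ := by
    intro h
    have h01 : f ⟨0, by omega⟩ ≠ f ⟨1, by omega⟩ := by
      intro he
      have h2 := congrArg Fin.val (hfinj he)
      simp at h2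
    have hadj : G.Adj (f ⟨0, by omega⟩) (f ⟨1, by omega⟩) := by
      simp only [h, SimpleGraph.top_adj]; exact h01
    exact hnotadj _ _ hadj
  rw [isoT, if_neg hne]
  have hmem : ((S.ncard : ℝ) / (nIso G S : ℝ)) ∈
      {r : ℝ | ∃ S : Set (HV m a b n), 2 ≤ nIso G S ∧ r = (S.ncard : ℝ) / (nIso G S : ℝ)} :=
    ⟨S, by rw [hnIso]; exact hcard2, rfl⟩
  have hbdd : BddBelow {r : ℝ | ∃ S : Set (HV m a b n), 2 ≤ nIso G S ∧
      r = (S.ncard : ℝ) / (nIso G S : ℝ)} := by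
    refine ⟨0, ?_⟩
    rintro r ⟨T, _, rfl⟩
    positivity
  calc sInf _ ≤ (S.ncard : ℝ) / (nIso G S : ℝ) := csInf_le hbdd hmem
    _ = _ := by rw [hnIso, hScard]
end

section
/- Let 1 ≤ a < b be integers and G a graph with δ(G) ≥ a + 2. If G − {x,y} has an [a,b]-factor for every pair of distinct vertices x, y ∈ V(G), then G − e has an [a,b]-factor for every edge e ∈ E(G). -/
open Finset
open scoped Classical

section AuxiliaryForStmt10

set_option linter.unusedSectionVars false

variable {V : Type*} [Fintype V]

noncomputable def nbr (H : SimpleGraph V) (v : V) : Finset V := univ.filter (fun w => H.Adj v w)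

noncomputable def degc (H : SimpleGraph V) (v : V) : ℕ := (nbr H v).card

@[simp] lemma mem_nbr {H : SimpleGraph V} {v z : V} : z ∈ nbr H v ↔ H.Adj v z := by
  simp [nbr]

lemma addE_adj {t z : V} (h : t ≠ z) (H : SimpleGraph V) (p q : V) :
    (H ⊔ SimpleGraph.fromEdgeSet {s(t,z)}).Adj p q ↔ H.Adj p q ∨ (p = t ∧ q = z) ∨ (p = z ∧ q = t) := by
  simp only [SimpleGraph.sup_adj, SimpleGraph.fromEdgeSet_adj, Set.mem_singleton_iff, Sym2.eq_iff]
  constructor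
  · rintro (h1 | ⟨(⟨rfl,rfl⟩|⟨rfl,rfl⟩), hne⟩) <;> tauto
  · rintro (h1 | ⟨rfl,rfl⟩ | ⟨rfl,rfl⟩) <;> simp_all [h.symm]

lemma delE_adj {t z : V} (H : SimpleGraph V) (p q : V) :
    (H.deleteEdges {s(t,z)}).Adj p q ↔ H.Adj p q ∧ ¬((p = t ∧ q = z) ∨ (p = z ∧ q = t)) := by
  simp only [SimpleGraph.deleteEdges_adj, Set.mem_singleton_iff, Sym2.eq_iff]

lemma degc_addE {t z : V} (h : t ≠ z) (H : SimpleGraph V) (hna : ¬ H.Adj t z) (w : V) :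
    degc (H ⊔ SimpleGraph.fromEdgeSet {s(t,z)}) w = degc H w + (if w = t ∨ w = z then 1 else 0) := by
  unfold degc
  by_cases hwt : w = t
  · subst hwt
    have h1 : nbr (H ⊔ SimpleGraph.fromEdgeSet {s(w,z)}) w = insert z (nbr H w) := by
      ext q
      simp only [mem_nbr, mem_insert, addE_adj h]
      tauto
    rw [h1, card_insert_of_notMem (by simp [hna])]
    simp
  · by_cases hwz : w = z
    · subst hwz
      have h1 : nbr (H ⊔ SimpleGraph.fromEdgeSet {s(t,w)}) w = insert t (nbr H w) := by
        ext q
        simp only [mem_nbr, mem_insert, addE_adj h]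
        tauto
      rw [h1, card_insert_of_notMem (by simp; intro hc; exact hna hc.symm)]
      simp [hwt]
    · have h1 : nbr (H ⊔ SimpleGraph.fromEdgeSet {s(t,z)}) w = nbr H w := by
        ext q
        simp only [mem_nbr, addE_adj h]
        tauto
      rw [h1]
      simp [hwt, hwz]

lemma degc_delE {t z : V} (H : SimpleGraph V) (hadj : H.Adj t z) (w : V) :
    degc (H.deleteEdges {s(t,z)}) w + (if w = t ∨ w = z then 1 else 0) = degc H w := by
  have h : t ≠ z := hadj.ne
  unfold degc
  by_cases hwt : w = t
  · subst hwt
    have h1 : nbr H w = insert z (nbr (H.deleteEdges {s(w,z)}) w) := by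
      ext q
      simp only [mem_nbr, mem_insert, delE_adj]
      by_cases hq : q = z <;> simp [hq, hadj] <;> tauto
    rw [h1, card_insert_of_notMem (by simp [delE_adj])]
    simp
  · by_cases hwz : w = z
    · subst hwz
      have h1 : nbr H w = insert t (nbr (H.deleteEdges {s(t,w)}) w) := by
        ext q
        simp only [mem_nbr, mem_insert, delE_adj]
        by_cases hq : q = t <;> simp [hq, hadj.symm] <;> tauto
      rw [h1, card_insert_of_notMem (by simp [delE_adj])]
      simp [hwt]
    · have h1 : nbr (H.deleteEdges {s(t,z)}) w = nbr H w := by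
        ext q
        simp only [mem_nbr, delE_adj]
        tauto
      rw [h1]
      simp [hwt, hwz]

/-- Alternating-trail reachability. `p = true` means the current vertex was entered
via a non-`H` edge (added), `p = false` means start vertex or entered via an `H` edge. -/
inductive Reach (G' H : SimpleGraph V) (x0 : V) : V → Bool → Finset (Sym2 V) → Prop
  | base : Reach G' H x0 x0 false ∅
  | addA {t z : V} {E : Finset (Sym2 V)} : Reach G' H x0 t false E → G'.Adj t z →
      ¬ H.Adj t z → s(t,z) ∉ E → Reach G' H x0 z true (insert s(t,z) E)
  | addR {s w : V} {E : Finset (Sym2 V)} : Reach G' H x0 s true E → H.Adj s w →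
      s(s,w) ∉ E → Reach G' H x0 w false (insert s(s,w) E)

lemma flipLem {G' H : SimpleGraph V} {x0 v : V} {p : Bool} {E : Finset (Sym2 V)}
    (hr : Reach G' H x0 v p E) (hHG : H ≤ G') :
    ∃ H' : SimpleGraph V, H' ≤ G' ∧
      (∀ y z : V, s(y,z) ∉ E → (H'.Adj y z ↔ H.Adj y z)) ∧
      (∀ w : V, (degc H' w : ℤ) =
        degc H w + (if w = x0 then 1 else 0) + (if w = v then (if p then 1 else -1) else 0)) := by
  induction hr with
  | base =>
      refine ⟨H, hHG, fun y z _ => Iff.rfl, fun w => ?_⟩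
      by_cases hw : w = x0 <;> simp [hw]
  | @addA t z E hr hGadj hHadj hEmem ih =>
      obtain ⟨H', hle, hagree, hdeg⟩ := ih
      have htz : t ≠ z := hGadj.ne
      have hH'na : ¬ H'.Adj t z := fun hc => hHadj ((hagree t z hEmem).1 hc)
      refine ⟨H' ⊔ SimpleGraph.fromEdgeSet {s(t,z)}, ?_, ?_, ?_⟩
      · apply sup_le hle
        intro p q hpq
        rcases ((SimpleGraph.fromEdgeSet_adj _).1 hpq) with ⟨hm, hne⟩
        rcases Sym2.eq_iff.1 (Set.mem_singleton_iff.1 hm) with ⟨rfl, rfl⟩ | ⟨rfl, rfl⟩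
        · exact hGadj
        · exact hGadj.symm
      · intro y z' hyz
        have h1 : s(y,z') ∉ E := fun hc => hyz (Finset.mem_insert_of_mem hc)
        have h2 : s(y,z') ≠ s(t,z) := fun hc => hyz (by rw [hc]; exact Finset.mem_insert_self _ _)
        rw [addE_adj htz, hagree y z' h1]
        have h3 : ¬((y = t ∧ z' = z) ∨ (y = z ∧ z' = t)) := by
          rintro (⟨rfl, rfl⟩ | ⟨rfl, rfl⟩)
          · exact h2 rfl
          · exact h2 (Sym2.eq_swap)
        tauto
      · intro w
        have := degc_addE htz H' hH'na w
        have hd := hdeg w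
        clear hdeg
        rw [this]
        push_cast
        split_ifs at hd ⊢ <;> first | omega | tauto | simp_all
  | @addR s w E hr hHadj hEmem ih =>
      obtain ⟨H', hle, hagree, hdeg⟩ := ih
      have hsw : s ≠ w := hHadj.ne
      have hH'a : H'.Adj s w := (hagree s w hEmem).2 hHadj
      refine ⟨H'.deleteEdges {s(s,w)}, ?_, ?_, ?_⟩
      · exact le_trans (SimpleGraph.deleteEdges_le _) hle
      · intro y z' hyz
        have h1 : s(y,z') ∉ E := fun hc => hyz (Finset.mem_insert_of_mem hc)
        have h2 : s(y,z') ≠ s(s,w) := fun hc => hyz (by rw [hc]; exact Finset.mem_insert_self _ _)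
        rw [delE_adj, hagree y z' h1]
        have h3 : ¬((y = s ∧ z' = w) ∨ (y = w ∧ z' = s)) := by
          rintro (⟨rfl, rfl⟩ | ⟨rfl, rfl⟩)
          · exact h2 rfl
          · exact h2 (Sym2.eq_swap)
        tauto
      · intro u
        have := degc_delE H' hH'a u
        have hd := hdeg u
        clear hdeg
        have : (degc (H'.deleteEdges {s(s,w)}) u : ℤ) + (if u = s ∨ u = w then 1 else 0) = degc H' u := by
          exact_mod_cast congrArg (Nat.cast : ℕ → ℤ) this
        split_ifs at hd this ⊢ <;> first | omega | tauto | simp_all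

lemma edges_class {G' H : SimpleGraph V} {x0 v : V} {p : Bool} {E : Finset (Sym2 V)}
    (hr : Reach G' H x0 v p E) :
    ∀ y z : V, s(y,z) ∈ E →
      ((¬ H.Adj y z → ((∃ E', Reach G' H x0 y true E') ∨ (∃ E', Reach G' H x0 z true E'))) ∧
       (H.Adj y z → ((∃ E', Reach G' H x0 y false E') ∨ (∃ E', Reach G' H x0 z false E')))) := by
  induction hr with
  | base => intro y z hyz; simp at hyz
  | @addA t z0 E hr hGadj hHadj hEmem ih =>
      intro y z hyz
      rcases Finset.mem_insert.1 hyz with heq | hold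
      · rcases Sym2.eq_iff.1 heq with ⟨rfl, rfl⟩ | ⟨rfl, rfl⟩
        · exact ⟨fun _ => Or.inr ⟨_, Reach.addA hr hGadj hHadj hEmem⟩,
            fun hc => absurd hc hHadj⟩
        · exact ⟨fun _ => Or.inl ⟨_, Reach.addA hr hGadj hHadj hEmem⟩,
            fun hc => absurd hc.symm hHadj⟩
      · obtain ⟨h1, h2⟩ := ih y z hold
        exact ⟨h1, h2⟩
  | @addR s w E hr hHadj hEmem ih =>
      intro y z hyz
      rcases Finset.mem_insert.1 hyz with heq | hold
      · rcases Sym2.eq_iff.1 heq with ⟨rfl, rfl⟩ | ⟨rfl, rfl⟩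
        · exact ⟨fun hc => absurd hHadj hc, fun _ => Or.inr ⟨_, Reach.addR hr hHadj hEmem⟩⟩
        · exact ⟨fun hc => absurd hHadj.symm hc, fun _ => Or.inl ⟨_, Reach.addR hr hHadj hEmem⟩⟩
      · exact ih y z hold

lemma degc_bot (w : V) : degc (⊥ : SimpleGraph V) w = 0 := by
  unfold degc
  have : nbr (⊥ : SimpleGraph V) w = ∅ := by ext z; simp
  simp [this]

lemma nbr_inter_card (K : SimpleGraph V) (t : V) (Y : Finset V) :
    (nbr K t ∩ Y).card = ∑ s ∈ Y, if K.Adj t s then 1 else 0 := by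
  rw [← Finset.card_filter]
  congr 1
  ext z
  simp only [mem_inter, mem_nbr, mem_filter]
  tauto

lemma double_count (K : SimpleGraph V) (A B : Finset V) :
    ∑ t ∈ A, (nbr K t ∩ B).card = ∑ s ∈ B, (nbr K s ∩ A).card := by
  calc ∑ t ∈ A, (nbr K t ∩ B).card = ∑ t ∈ A, ∑ s ∈ B, if K.Adj t s then 1 else 0 :=
        Finset.sum_congr rfl fun t _ => nbr_inter_card K t B
    _ = ∑ s ∈ B, ∑ t ∈ A, if K.Adj t s then 1 else 0 := Finset.sum_comm
    _ = ∑ s ∈ B, (nbr K s ∩ A).card := by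
        refine Finset.sum_congr rfl fun s _ => ?_
        rw [← Finset.card_filter]
        congr 1
        ext z
        simp only [mem_inter, mem_nbr, mem_filter]
        constructor
        · rintro ⟨h1, h2⟩; exact ⟨h2.symm, h1⟩
        · rintro ⟨h1, h2⟩; exact ⟨h2, h1.symm⟩

lemma mainLem (G G' : SimpleGraph V) (a b : ℕ) (ha : 1 ≤ a) (hab : a < b) (u₀ v₀ : V)
    (hG'G : ∀ t z : V, G'.Adj t z → G.Adj t z)
    (hGG' : ∀ t z : V, G.Adj t z → G'.Adj t z ∨ ((t = u₀ ∧ z = v₀) ∨ (t = v₀ ∧ z = u₀)))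
    (hδ : ∀ w : V, a + 1 ≤ degc G' w)
    (hfacV : ∀ x y : V, x ≠ y → ∃ F : SimpleGraph V,
      (∀ p q : V, F.Adj p q → G.Adj p q) ∧ (∀ z, ¬ F.Adj x z) ∧ (∀ z, ¬ F.Adj y z) ∧
      (∀ w : V, w ≠ x → w ≠ y → a ≤ degc F w ∧ degc F w ≤ b)) :
    ∃ H : SimpleGraph V, H ≤ G' ∧ ∀ w : V, a ≤ degc H w ∧ degc H w ≤ b := by
  classical
  -- extremal subgraph
  set Φ : SimpleGraph V → ℕ := fun K => ∑ w : V, min (degc K w) a with hΦdef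
  set P : SimpleGraph V → Prop := fun K => K ≤ G' ∧ ∀ w, degc K w ≤ b with hPdef
  have hne : {m | ∃ K, P K ∧ Φ K = m}.Nonempty := by
    refine ⟨Φ ⊥, ⊥, ⟨bot_le, fun w => ?_⟩, rfl⟩
    rw [degc_bot]; omega
  have hbdd : BddAbove {m | ∃ K, P K ∧ Φ K = m} := by
    refine ⟨a * Fintype.card V, fun m hm => ?_⟩
    obtain ⟨K, _, rfl⟩ := hm
    calc Φ K ≤ ∑ _w : V, a := Finset.sum_le_sum fun w _ => min_le_right _ _
      _ = a * Fintype.card V := by rw [Finset.sum_const, card_univ, smul_eq_mul, mul_comm]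
  obtain ⟨H, hPH, hΦH⟩ := Nat.sSup_mem hne hbdd
  obtain ⟨hHle, hHb⟩ := hPH
  have hmax : ∀ K, P K → Φ K ≤ Φ H := fun K hK => hΦH ▸ le_csSup hbdd ⟨K, hK, rfl⟩
  by_cases hdefq : ∀ w, a ≤ degc H w
  · exact ⟨H, hHle, fun w => ⟨hdefq w, hHb w⟩⟩
  push_neg at hdefq
  obtain ⟨x0, hx0⟩ := hdefq
  exfalso
  -- degree facts from maximality
  have hSdeg : ∀ v (E : Finset (Sym2 V)), Reach G' H x0 v true E → degc H v = b := by
    intro v E hrv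
    by_contra hne'
    have hvb : degc H v < b := lt_of_le_of_ne (hHb v) hne'
    obtain ⟨H', hle', hagree', hdeg'⟩ := flipLem hrv hHle
    have hPH' : P H' := by
      refine ⟨hle', fun w => ?_⟩
      have hd := hdeg' w
      have h1 := hHb w
      by_cases hwx : w = x0 <;> by_cases hwv : w = v <;> subst_vars <;>
        split_ifs at hd <;> first | omega | tauto
    have hle2 := hmax H' hPH'
    have hlt : Φ H < Φ H' := by
      apply Finset.sum_lt_sum
      · intro w _
        have hd := hdeg' w
        by_cases hwx : w = x0 <;> by_cases hwv : w = v <;> subst_vars <;>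
          split_ifs at hd <;> first | omega | tauto
      · refine ⟨x0, Finset.mem_univ _, ?_⟩
        have hd := hdeg' x0
        by_cases hwv : x0 = v <;> subst_vars <;>
          split_ifs at hd <;> first | omega | tauto
    omega
  have hTdeg : ∀ v (E : Finset (Sym2 V)), Reach G' H x0 v false E → degc H v ≤ a := by
    intro v E hrv
    by_cases hvx : v = x0
    · subst hvx; omega
    by_contra hne'
    push_neg at hne'
    obtain ⟨H', hle', hagree', hdeg'⟩ := flipLem hrv hHle
    have hPH' : P H' := by
      refine ⟨hle', fun w => ?_⟩
      have hd := hdeg' w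
      have h1 := hHb w
      by_cases hwx : w = x0 <;> by_cases hwv : w = v <;> subst_vars <;>
        split_ifs at hd <;> first | omega | tauto
    have hle2 := hmax H' hPH'
    have hlt : Φ H < Φ H' := by
      apply Finset.sum_lt_sum
      · intro w _
        have hd := hdeg' w
        by_cases hwx : w = x0 <;> by_cases hwv : w = v <;> subst_vars <;>
          split_ifs at hd <;> first | omega | tauto
      · refine ⟨x0, Finset.mem_univ _, ?_⟩
        have hd := hdeg' x0
        by_cases hwv : x0 = v <;> subst_vars <;>
          split_ifs at hd <;> first | omega | tauto
    omega
  -- the sets S and T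
  set S : Finset V := univ.filter (fun v => ∃ E, Reach G' H x0 v true E) with hSdef
  set T : Finset V := univ.filter (fun v => ∃ E, Reach G' H x0 v false E) with hTdef
  have hx0T : x0 ∈ T := by
    rw [hTdef]; exact Finset.mem_filter.2 ⟨Finset.mem_univ _, ⟨∅, Reach.base⟩⟩
  have hSb : ∀ s ∈ S, degc H s = b := by
    intro s hs
    obtain ⟨E, hrE⟩ := (Finset.mem_filter.1 hs).2
    exact hSdeg s E hrE
  have hTa : ∀ t ∈ T, degc H t ≤ a := by
    intro t ht
    obtain ⟨E, hrE⟩ := (Finset.mem_filter.1 ht).2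
    exact hTdeg t E hrE
  have hST : ∀ v, v ∈ S → v ∈ T → False := by
    intro v hvS hvT
    have h1 := hSb v hvS
    have h2 := hTa v hvT
    omega
  have closure1 : ∀ t ∈ T, ∀ z, G'.Adj t z → ¬ H.Adj t z → z ∈ S := by
    intro t ht z hadj hnadj
    obtain ⟨E, hrE⟩ := (Finset.mem_filter.1 ht).2
    by_cases hmem : s(t,z) ∈ E
    · rcases (edges_class hrE t z hmem).1 hnadj with ⟨E', hE'⟩ | ⟨E', hE'⟩
      · exact absurd ht (fun htT => hST t (Finset.mem_filter.2 ⟨Finset.mem_univ _, ⟨E', hE'⟩⟩) htT)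
      · exact Finset.mem_filter.2 ⟨Finset.mem_univ _, ⟨E', hE'⟩⟩
    · exact Finset.mem_filter.2 ⟨Finset.mem_univ _, ⟨_, Reach.addA hrE hadj hnadj hmem⟩⟩
  have closure2 : ∀ s ∈ S, ∀ w, H.Adj s w → w ∈ T := by
    intro s hs w hadj
    obtain ⟨E, hrE⟩ := (Finset.mem_filter.1 hs).2
    by_cases hmem : s(s,w) ∈ E
    · rcases (edges_class hrE s w hmem).2 hadj with ⟨E', hE'⟩ | ⟨E', hE'⟩
      · exact absurd hs (fun hsS => hST s hsS (Finset.mem_filter.2 ⟨Finset.mem_univ _, ⟨E', hE'⟩⟩))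
      · exact Finset.mem_filter.2 ⟨Finset.mem_univ _, ⟨E', hE'⟩⟩
    · exact Finset.mem_filter.2 ⟨Finset.mem_univ _, ⟨_, Reach.addR hrE hadj hmem⟩⟩
  -- the degree of t in G' - S
  set d' : V → ℕ := fun t => ((nbr G' t) \ S).card with hd'def
  -- lower bound for the sum
  have key1 : ∀ t ∈ T, ((nbr H t ∩ S).card : ℤ) + (a - degc H t) ≤ (a : ℤ) - d' t := by
    intro t ht
    have hsub : (nbr G' t \ S) ⊆ (nbr H t \ S) := by
      intro z hz
      rw [Finset.mem_sdiff] at hz ⊢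
      refine ⟨?_, hz.2⟩
      rw [mem_nbr] at hz ⊢
      by_contra hnadj
      exact hz.2 (closure1 t ht z hz.1 hnadj)
    have h1 : (nbr H t ∩ S).card + (nbr H t \ S).card = degc H t :=
      Finset.card_inter_add_card_sdiff _ _
    have h2 : d' t ≤ (nbr H t \ S).card := Finset.card_le_card hsub
    omega
  have sum2 : ∑ t ∈ T, ((nbr H t ∩ S).card : ℤ) = (b : ℤ) * S.card := by
    have h1 : ∑ t ∈ T, (nbr H t ∩ S).card = ∑ s ∈ S, (nbr H s ∩ T).card := double_count H T S
    have h2 : ∀ s ∈ S, (nbr H s ∩ T).card = b := by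
      intro s hs
      have : nbr H s ∩ T = nbr H s := by
        apply Finset.inter_eq_left.2
        intro z hz
        exact closure2 s hs z (mem_nbr.1 hz)
      rw [this]
      exact hSb s hs
    have hN : ∑ t ∈ T, (nbr H t ∩ S).card = b * S.card := by
      rw [h1, Finset.sum_congr rfl h2, Finset.sum_const, smul_eq_mul, mul_comm]
    rw [← Nat.cast_sum]
    exact_mod_cast hN
  have lower : (1 : ℤ) + b * S.card ≤ ∑ t ∈ T, ((a : ℤ) - d' t) := by
    have h1 : ∑ t ∈ T, (((nbr H t ∩ S).card : ℤ) + (a - degc H t)) ≤ ∑ t ∈ T, ((a : ℤ) - d' t) :=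
      Finset.sum_le_sum key1
    rw [Finset.sum_add_distrib, sum2] at h1
    have h2 : (1 : ℤ) ≤ ∑ t ∈ T, ((a : ℤ) - degc H t) := by
      have hterm : ∀ t ∈ T, (0 : ℤ) ≤ (a : ℤ) - degc H t := by
        intro t ht
        have := hTa t ht
        omega
      have := Finset.single_le_sum hterm hx0T
      have h3 := hx0
      omega
    linarith
  have upper : ∀ t ∈ T, (a : ℤ) - d' t ≤ (S.card : ℤ) - 1 := by
    intro t ht
    have h5 : d' t = (nbr G' t \ S).card := rfl
    have h1 : (nbr G' t).card ≤ d' t + S.card := by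
      have := Finset.card_inter_add_card_sdiff (nbr G' t) S
      have h2 : (nbr G' t ∩ S).card ≤ S.card := Finset.card_le_card Finset.inter_subset_right
      omega
    have h3 := hδ t
    have h4 : degc G' t = (nbr G' t).card := rfl
    have h5 : d' t = (nbr G' t \ S).card := rfl
    omega
  by_cases hScard : S.card ≤ 1
  · -- small S: every term is ≤ S.card - 1 ≤ 0, contradiction with lower bound
    have h1 : ∑ t ∈ T, ((a : ℤ) - d' t) ≤ ∑ t ∈ T, ((S.card : ℤ) - 1) :=
      Finset.sum_le_sum upper
    rw [Finset.sum_const, nsmul_eq_mul] at h1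
    have h2 : ((S.card : ℤ) - 1) ≤ 0 := by
      have : (S.card : ℤ) ≤ 1 := by exact_mod_cast hScard
      omega
    have h3 : (T.card : ℤ) * ((S.card : ℤ) - 1) ≤ 0 :=
      mul_nonpos_of_nonneg_of_nonpos (by positivity) h2
    have h4 : (0 : ℤ) ≤ (b : ℤ) * S.card := by positivity
    linarith
  · -- big S: pick x ≠ y in S and use the [a,b]-factor of G - {x,y}
    push_neg at hScard
    obtain ⟨x, hxS, y, hyS, hxy⟩ := Finset.one_lt_card.1 hScard
    obtain ⟨F, hFG, hFx, hFy, hFdeg⟩ := hfacV x y hxy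
    set S₂ : Finset V := (S.erase x).erase y with hS₂def
    have hyex : y ∈ S.erase x := Finset.mem_erase.2 ⟨hxy.symm, hyS⟩
    have hS₂card : S₂.card + 2 = S.card := by
      have h1 : (S.erase x).card = S.card - 1 := Finset.card_erase_of_mem hxS
      have h2 : S₂.card = (S.erase x).card - 1 := Finset.card_erase_of_mem hyex
      have h3 : 1 ≤ S.card := Finset.card_pos.2 ⟨x, hxS⟩
      have h4 : 1 ≤ (S.erase x).card := Finset.card_pos.2 ⟨y, hyex⟩
      omega
    have hS₂mem : ∀ s ∈ S₂, s ≠ x ∧ s ≠ y ∧ s ∈ S := by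
      intro s hs
      have h1 := Finset.mem_erase.1 hs
      have h2 := Finset.mem_erase.1 h1.2
      exact ⟨h2.1, h1.1, h2.2⟩
    have hTxy : ∀ t ∈ T, t ≠ x ∧ t ≠ y := by
      intro t ht
      constructor
      · intro h; subst h; exact hST t hxS ht
      · intro h; subst h; exact hST t hyS ht
    have key2 : ∀ t ∈ T, (a : ℤ) - d' t ≤ ((nbr F t ∩ S₂).card : ℤ)
        + (if t = u₀ then 1 else 0) + (if t = v₀ then 1 else 0) := by
      intro t ht
      obtain ⟨htx, hty⟩ := hTxy t ht
      have haF : a ≤ degc F t := (hFdeg t htx hty).1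
      have hsplit : (nbr F t ∩ S₂).card + (nbr F t \ S₂).card = degc F t :=
        Finset.card_inter_add_card_sdiff _ _
      have hsub : (nbr F t \ S₂) ⊆ (nbr G' t \ S)
          ∪ ((if t = u₀ then ({v₀} : Finset V) else ∅) ∪ (if t = v₀ then ({u₀} : Finset V) else ∅)) := by
        intro z hz
        rw [Finset.mem_sdiff, mem_nbr] at hz
        obtain ⟨hFadj, hzS₂⟩ := hz
        have hzx : z ≠ x := by
          intro h; subst h; exact hFx t hFadj.symm
        have hzy : z ≠ y := by
          intro h; subst h; exact hFy t hFadj.symm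
        have hzS : z ∉ S := by
          intro hzS
          exact hzS₂ (Finset.mem_erase.2 ⟨hzy, Finset.mem_erase.2 ⟨hzx, hzS⟩⟩)
        have hGadj : G.Adj t z := hFG t z hFadj
        rcases hGG' t z hGadj with hG'adj | ⟨rfl, rfl⟩ | ⟨rfl, rfl⟩
        · exact Finset.mem_union_left _ (Finset.mem_sdiff.2 ⟨mem_nbr.2 hG'adj, hzS⟩)
        · apply Finset.mem_union_right
          apply Finset.mem_union_left
          rw [if_pos rfl]
          exact Finset.mem_singleton_self _
        · apply Finset.mem_union_right
          apply Finset.mem_union_right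
          rw [if_pos rfl]
          exact Finset.mem_singleton_self _
      have hcard : (nbr F t \ S₂).card ≤ d' t
          + (if t = u₀ then 1 else 0) + (if t = v₀ then 1 else 0) := by
        calc (nbr F t \ S₂).card
            ≤ ((nbr G' t \ S) ∪ ((if t = u₀ then ({v₀} : Finset V) else ∅) ∪ (if t = v₀ then ({u₀} : Finset V) else ∅))).card :=
              Finset.card_le_card hsub
          _ ≤ (nbr G' t \ S).card + ((if t = u₀ then ({v₀} : Finset V) else ∅) ∪ (if t = v₀ then ({u₀} : Finset V) else ∅)).card :=
              Finset.card_union_le _ _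
          _ ≤ (nbr G' t \ S).card + ((if t = u₀ then ({v₀} : Finset V) else ∅).card
              + (if t = v₀ then ({u₀} : Finset V) else ∅).card) := by
              have := Finset.card_union_le (if t = u₀ then ({v₀} : Finset V) else ∅)
                (if t = v₀ then ({u₀} : Finset V) else ∅)
              omega
          _ = d' t + (if t = u₀ then 1 else 0) + (if t = v₀ then 1 else 0) := by
              have e1 : (if t = u₀ then ({v₀} : Finset V) else ∅).card = (if t = u₀ then 1 else 0) := by
                split_ifs <;> simp
              have e2 : (if t = v₀ then ({u₀} : Finset V) else ∅).card = (if t = v₀ then 1 else 0) := by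
                split_ifs <;> simp
              rw [e1, e2]
              have h5 : d' t = (nbr G' t \ S).card := rfl
              omega
      have hcast : ((nbr F t \ S₂).card : ℤ) ≤ (d' t : ℤ)
          + (if t = u₀ then 1 else 0) + (if t = v₀ then 1 else 0) := by
        split_ifs at hcard ⊢ <;> exact_mod_cast hcard
      have hc2 : ((nbr F t ∩ S₂).card : ℤ) + (nbr F t \ S₂).card = degc F t := by
        exact_mod_cast hsplit
      have hc3 : (a : ℤ) ≤ degc F t := by exact_mod_cast haF
      split_ifs at hcast ⊢ <;> omega
    -- sum the per-vertex bounds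
    have hsumkey : ∑ t ∈ T, ((a : ℤ) - d' t) ≤ (∑ t ∈ T, ((nbr F t ∩ S₂).card : ℤ)) + 2 := by
      have h1 : ∑ t ∈ T, ((a : ℤ) - d' t) ≤ ∑ t ∈ T, (((nbr F t ∩ S₂).card : ℤ)
          + (if t = u₀ then 1 else 0) + (if t = v₀ then 1 else 0)) := Finset.sum_le_sum key2
      have h2 : ∑ t ∈ T, ((if t = u₀ then (1:ℤ) else 0)) ≤ 1 := by
        rw [Finset.sum_ite_eq' T u₀ (fun _ => (1:ℤ))]
        split_ifs <;> omega
      have h3 : ∑ t ∈ T, ((if t = v₀ then (1:ℤ) else 0)) ≤ 1 := by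
        rw [Finset.sum_ite_eq' T v₀ (fun _ => (1:ℤ))]
        split_ifs <;> omega
      rw [Finset.sum_add_distrib, Finset.sum_add_distrib] at h1
      linarith
  -- double count against S₂
    have hdc : ∑ t ∈ T, ((nbr F t ∩ S₂).card : ℤ) ≤ (b : ℤ) * S₂.card := by
      have h1 : ∑ t ∈ T, (nbr F t ∩ S₂).card = ∑ s ∈ S₂, (nbr F s ∩ T).card := double_count F T S₂
      have h2 : ∀ s ∈ S₂, (nbr F s ∩ T).card ≤ b := by
        intro s hs
        obtain ⟨hsx, hsy, _⟩ := hS₂mem s hs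
        calc (nbr F s ∩ T).card ≤ (nbr F s).card := Finset.card_le_card Finset.inter_subset_left
          _ ≤ b := (hFdeg s hsx hsy).2
      have h3 : ∑ s ∈ S₂, (nbr F s ∩ T).card ≤ b * S₂.card := by
        calc ∑ s ∈ S₂, (nbr F s ∩ T).card ≤ ∑ _s ∈ S₂, b := Finset.sum_le_sum h2
          _ = b * S₂.card := by rw [Finset.sum_const, smul_eq_mul, mul_comm]
      have h4 : ∑ t ∈ T, (nbr F t ∩ S₂).card ≤ b * S₂.card := h1 ▸ h3
      rw [← Nat.cast_sum]
      exact_mod_cast h4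
    have hfin : (1 : ℤ) + b * S.card ≤ (b : ℤ) * S₂.card + 2 := by linarith
    have hcards : (S.card : ℤ) = (S₂.card : ℤ) + 2 := by exact_mod_cast hS₂card.symm
    rw [hcards] at hfin
    have hb2 : (2 : ℤ) ≤ (b : ℤ) := by exact_mod_cast hab.trans_le' (by omega)
    nlinarith



lemma deg_eq_degc (H : SimpleGraph V) (v : V) : deg H v = degc H v := by
  rw [deg, degc, ← Set.ncard_coe_finset]
  congr 1
  ext z
  simp [SimpleGraph.neighborSet, nbr]


end AuxiliaryForStmt10

theorem stmt_10 {V : Type*} [Fintype V] (G : SimpleGraph V) (a b : ℕ)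
    (ha : 1 ≤ a) (hab : a < b)
    (hdeg : ∀ v : V, a + 2 ≤ deg G v)
    (hfac : ∀ x y : V, x ≠ y → HasABFactor (SimpleGraph.induce ({x, y} : Set V)ᶜ G) a b) :
    ∀ e ∈ G.edgeSet, HasABFactor (G.deleteEdges {e}) a b := by
  intro e
  induction e using Sym2.ind with
  | _ u₀ v₀ =>
  intro he
  rw [SimpleGraph.mem_edgeSet] at he
  set G' := G.deleteEdges {s(u₀, v₀)} with hG'def
  have hG'G : ∀ t z : V, G'.Adj t z → G.Adj t z := by
    intro t z h
    exact (SimpleGraph.deleteEdges_adj.1 h).1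
  have hGG' : ∀ t z : V, G.Adj t z → G'.Adj t z ∨ ((t = u₀ ∧ z = v₀) ∨ (t = v₀ ∧ z = u₀)) := by
    intro t z h
    by_cases hm : s(t, z) = s(u₀, v₀)
    · exact Or.inr (Sym2.eq_iff.1 hm)
    · exact Or.inl (SimpleGraph.deleteEdges_adj.2 ⟨h, by simpa using hm⟩)
  have hδ' : ∀ w : V, a + 1 ≤ degc G' w := by
    intro w
    have h1 : degc (G.deleteEdges {s(u₀, v₀)}) w + (if w = u₀ ∨ w = v₀ then 1 else 0) = degc G w :=
      degc_delE G he w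
    rw [← hG'def] at h1
    have h2 : a + 2 ≤ degc G w := by rw [← deg_eq_degc]; exact hdeg w
    split_ifs at h1 <;> omega
  have hfacV : ∀ x y : V, x ≠ y → ∃ F : SimpleGraph V,
      (∀ p q : V, F.Adj p q → G.Adj p q) ∧ (∀ z, ¬ F.Adj x z) ∧ (∀ z, ¬ F.Adj y z) ∧
      (∀ w : V, w ≠ x → w ≠ y → a ≤ degc F w ∧ degc F w ≤ b) := by
    intro x y hxy
    obtain ⟨H₀, hH₀le, hH₀deg⟩ := hfac x y hxy
    refine ⟨SimpleGraph.map (Function.Embedding.subtype _) H₀, ?_, ?_, ?_, ?_⟩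
    · intro p q hpq
      rw [SimpleGraph.map_adj] at hpq
      obtain ⟨u, v, huv, rfl, rfl⟩ := hpq
      exact hH₀le huv
    · intro z hz
      rw [SimpleGraph.map_adj] at hz
      obtain ⟨u, v, huv, hux, rfl⟩ := hz
      simp only [Function.Embedding.coe_subtype] at hux
      have h2 : (u : V) ∈ ({x, y} : Set V)ᶜ := u.2
      rw [hux] at h2
      simp at h2
    · intro z hz
      rw [SimpleGraph.map_adj] at hz
      obtain ⟨u, v, huv, huy, rfl⟩ := hz
      simp only [Function.Embedding.coe_subtype] at huy
      have h2 : (u : V) ∈ ({x, y} : Set V)ᶜ := u.2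
      rw [huy] at h2
      simp at h2
    · intro w hwx hwy
      have hwmem : w ∈ ({x, y} : Set V)ᶜ := by simp [hwx, hwy]
      have hns : (SimpleGraph.map (Function.Embedding.subtype _) H₀).neighborSet w
          = Subtype.val '' (H₀.neighborSet ⟨w, hwmem⟩) := by
        ext z
        simp only [SimpleGraph.mem_neighborSet, SimpleGraph.map_adj, Set.mem_image]
        constructor
        · rintro ⟨u, v, huv, hu, rfl⟩
          refine ⟨v, ?_, rfl⟩
          have : u = ⟨w, hwmem⟩ := Subtype.ext hu
          rwa [this] at huv
        · rintro ⟨v, hv, rfl⟩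
          exact ⟨⟨w, hwmem⟩, v, hv, rfl, rfl⟩
      have hdeg_eq : degc (SimpleGraph.map (Function.Embedding.subtype _) H₀) w
          = deg H₀ ⟨w, hwmem⟩ := by
        rw [← deg_eq_degc, deg, hns, Set.ncard_image_of_injective _ Subtype.val_injective, deg]
      rw [hdeg_eq]
      exact hH₀deg ⟨w, hwmem⟩
  obtain ⟨H, hHle, hHdeg⟩ := mainLem G G' a b ha hab u₀ v₀ hG'G hGG' hδ' hfacV
  exact ⟨H, hHle, fun v => by rw [deg_eq_degc]; exact hHdeg v⟩
end

section
/- Let 1 ≤ a < b be integers, G a graph, and e = uv an edge of G. Then G − e has an [a,b]-factor if and only if for every S ⊆ V(G), δ_G(a,b;S) := b|S| − a|T| + d_{G−S}(T) ≥ ρ(S), where T = {x ∈ V(G)−S : d_{G−S}(x) ≤ a−1}, T' = {x ∈ V(G)−S : d_{(G−e)−S}(x) ≤ a−1}, and ρ(S) = 2 if both u and v are in T', ρ(S) = 1 if exactly one of u, v is in T' and the other lies in G − (S ∪ T'), and ρ(S) = 0 otherwise. -/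
open Finset
open scoped Classical

/-!
For `a < b`, Lovász's criterion says that `H` has an `[a,b]`-factor iff for every `S` the
deficiency `∑_{x ∉ S} max (0, a - d_{H-S}(x)) = a|T| - d_{H-S}(T)` is at most `b|S|`.
Necessity is double counting of the factor's edges between `S` and `T`. For sufficiency take
`F ≤ H` of maximum degree at most `b` maximizing `∑ₓ min (a, d_F(x))`, and suppose `d_F(w) < a`.
Switching `F` along an alternating trail from `w` would increase that sum, unless every vertex
reached by a trail ending outside `F` has `d_F = b` and every vertex reached by a trail ending in
`F` has `d_F ≤ a`. The set `S` of the former vertices then has deficiency at least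
`b|S| + a - d_F(w) > b|S|`, witnessed by the latter vertices.

Deleting `uv` lowers `d_{G-S}(u)` by one exactly when `v ∉ S`, symmetrically at `v`, and changes
nothing else; so the deficiency of `S` grows by `ρ(S)`, which turns the criterion for `G - uv`
into the stated condition on `G`.
-/
section Counting
variable {V : Type*}

lemma sum_card_adj_comm (G : SimpleGraph V) (s t : Finset V) :
    ∑ x ∈ s, #{y ∈ t | G.Adj x y} = ∑ y ∈ t, #{x ∈ s | G.Adj y x} := by
  refine (sum_card_bipartiteAbove_eq_sum_card_bipartiteBelow G.Adj).trans
    (sum_congr rfl fun y _ => ?_)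
  simp only [bipartiteBelow, G.adj_comm _ y]

variable [Fintype V]

lemma deg_eq_card_filter (G : SimpleGraph V) (x : V) : deg G x = #{y | G.Adj x y} := by
  rw [deg, Set.ncard_eq_toFinset_card']
  congr 1; ext y; simp

lemma degS_eq_card_filter (G : SimpleGraph V) (S : Set V) (x : V) :
    degS G S x = #{y | G.Adj x y ∧ y ∉ S} := by
  rw [degS, Set.ncard_eq_toFinset_card']
  congr 1; ext y; simp

lemma deg_eq_card_adj_mem_add_degS (G : SimpleGraph V) (S : Set V) (x : V) :
    deg G x = #{y ∈ S.toFinset | G.Adj x y} + degS G S x := by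
  rw [deg_eq_card_filter, degS_eq_card_filter, ← card_filter_add_card_filter_not (p := (· ∈ S)),
    filter_filter, filter_filter]
  congr 2
  ext y
  simp [and_comm]

lemma degS_mono {F G : SimpleGraph V} (h : F ≤ G) (S : Set V) (x : V) :
    degS F S x ≤ degS G S x :=
  Set.ncard_le_ncard (Set.sdiff_subset_sdiff_left (SimpleGraph.neighborSet_mono h x))

lemma card_adj_le_deg (G : SimpleGraph V) (s : Finset V) (x : V) :
    #{y ∈ s | G.Adj x y} ≤ deg G x := by
  rw [deg_eq_card_filter]
  exact card_le_card (monotone_filter_left _ (subset_univ s))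

lemma sum_ite_sym2_eq {M : Type*} [AddCommMonoid M] {u v : V} (huv : u ≠ v) (x : V)
    (f : V → M) :
    ∑ y, (if s(x, y) = s(u, v) then f y else 0) =
      (if x = u then f v else 0) + (if x = v then f u else 0) := by
  by_cases hxu : x = u
  · subst hxu
    simp [huv]
  · by_cases hxv : x = v
    · subst hxv
      simp [hxu]
    · simp [hxu, hxv]

end Counting

section Deficiency
variable {V : Type*} [Fintype V]

/-- Truncated subtraction makes each summand `max 0 (a - d_{H-S}(x))`. -/
noncomputable def deficiency (H : SimpleGraph V) (a : ℕ) (S : Set V) : ℕ :=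
  ∑ x ∈ Sᶜ.toFinset, (a - degS H S x)

lemma dSum_eq_sum (H : SimpleGraph V) (S T : Set V) :
    dSum H S T = ∑ x ∈ T.toFinset, degS H S x := by
  rw [dSum, ← finsum_mem_coe_finset, Set.coe_toFinset]

lemma mul_ncard_Tset_eq (H : SimpleGraph V) (a : ℕ) (S : Set V) :
    a * (Tset H S a).ncard = deficiency H a S + dSum H S (Tset H S a) := by
  have hT : (Tset H S a).toFinset = {x ∈ Sᶜ.toFinset | degS H S x ≤ a - 1} := by
    ext x; rw [Set.mem_toFinset, mem_filter, Set.mem_toFinset]; rfl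
  rw [Set.ncard_eq_toFinset_card', dSum_eq_sum, deficiency,
    ← sum_filter_of_ne (p := fun x => degS H S x ≤ a - 1) (fun x _ h => by omega), ← hT,
    ← sum_add_distrib, mul_comm, ← smul_eq_mul, ← sum_const]
  refine sum_congr rfl fun x hx => ?_
  have : degS H S x ≤ a - 1 := (Set.mem_toFinset.1 hx).2
  omega

lemma deficiency_le_of_hasABFactor {H : SimpleGraph V} {a b : ℕ} (hf : HasABFactor H a b)
    (S : Set V) : deficiency H a S ≤ b * S.ncard := by
  obtain ⟨F, hFH, hF⟩ := hf
  have hx : ∀ x, a - degS H S x ≤ #{y ∈ S.toFinset | F.Adj x y} := fun x => by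
    have := deg_eq_card_adj_mem_add_degS F S x
    have := degS_mono hFH S x
    have := (hF x).1
    omega
  calc deficiency H a S ≤ ∑ x ∈ Sᶜ.toFinset, #{y ∈ S.toFinset | F.Adj x y} :=
        sum_le_sum fun x _ => hx x
    _ = ∑ y ∈ S.toFinset, #{x ∈ Sᶜ.toFinset | F.Adj y x} := sum_card_adj_comm F _ _
    _ ≤ ∑ y ∈ S.toFinset, b := sum_le_sum fun y _ => (card_adj_le_deg F _ y).trans (hF y).2
    _ = b * S.ncard := by rw [sum_const, smul_eq_mul, mul_comm, Set.ncard_eq_toFinset_card']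

end Deficiency

section AlternatingTrails
variable {V : Type*} {H F : SimpleGraph V}

/-- Read from `w` to `v`, `p` is a trail of `H` whose edges alternate between `H \ F` and `F`,
starting outside `F`; `inF` records whether the last edge, at `v`, lies in `F` (the empty trail
counts as ending in `F`). -/
def AltTrail (H F : SimpleGraph V) : ∀ {v w : V}, Bool → H.Walk v w → Prop
  | _, _, inF, .nil => inF = true
  | _, _, inF, .cons (u := x) (v := y) _ p =>
      s(x, y) ∉ p.edges ∧ (F.Adj x y ↔ inF = true) ∧ AltTrail H F (!inF) p

def AltReach (H F : SimpleGraph V) (w : V) (inF : Bool) (v : V) : Prop :=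
  ∃ p : H.Walk v w, AltTrail H F inF p

lemma altReach_self (H F : SimpleGraph V) (w : V) : AltReach H F w true w := ⟨.nil, rfl⟩

lemma altReach_of_mem_edges {v w x y : V} {c : Bool} {p : H.Walk v w}
    (hp : AltTrail H F c p) (he : s(x, y) ∈ p.edges) :
    AltReach H F w (decide (F.Adj x y)) x ∨ AltReach H F w (decide (F.Adj x y)) y := by
  induction p generalizing c with
  | nil => simp at he
  | cons h q ih =>
    rw [SimpleGraph.Walk.edges_cons, List.mem_cons] at he
    rcases he with he | he
    · have hc : decide (F.Adj x y) = c := by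
        rw [Sym2.eq_iff] at he
        rcases he with ⟨rfl, rfl⟩ | ⟨rfl, rfl⟩
        · cases c <;> simpa using hp.2.1
        · cases c <;> simpa [F.adj_comm] using hp.2.1
      rw [hc]
      rcases Sym2.eq_iff.1 he with ⟨rfl, -⟩ | ⟨-, rfl⟩
      · exact .inl ⟨_, hp⟩
      · exact .inr ⟨_, hp⟩
    · exact ih hp.2.2 he

lemma altReach_extend {w v x : V} {c : Bool} (hv : AltReach H F w c v) (hvx : H.Adj v x)
    (hF : F.Adj v x ↔ c = false) : AltReach H F w (!c) x ∨ AltReach H F w (!c) v := by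
  obtain ⟨p, hp⟩ := hv
  by_cases he : s(x, v) ∈ p.edges
  · have hc : decide (F.Adj x v) = !c := by
      rw [F.adj_comm] at hF
      cases c <;> simpa using hF
    exact hc ▸ altReach_of_mem_edges hp he
  · refine .inl ⟨.cons hvx.symm p, he, ?_, by simpa using hp⟩
    rw [F.adj_comm, hF]
    cases c <;> simp

open scoped symmDiff in
def switch (F : SimpleGraph V) {v w : V} (p : H.Walk v w) : SimpleGraph V :=
  SimpleGraph.fromEdgeSet (F.edgeSet ∆ {e | e ∈ p.edges})

lemma switch_adj {v w : V} (p : H.Walk v w) {x y : V} :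
    (switch F p).Adj x y ↔ (F.Adj x y ↔ s(x, y) ∉ p.edges) := by
  by_cases hxy : x = y
  · subst hxy
    have : s(x, x) ∉ p.edges := fun h => (p.adj_of_mem_edges h).ne rfl
    simp [switch, this]
  · simp only [switch, SimpleGraph.fromEdgeSet_adj, Set.mem_symmDiff, SimpleGraph.mem_edgeSet,
      Set.mem_ofPred_eq, ne_eq, hxy, not_false_eq_true, and_true]
    tauto

lemma switch_le (hFH : F ≤ H) {v w : V} (p : H.Walk v w) : switch F p ≤ H := by
  intro x y h
  by_cases hp : s(x, y) ∈ p.edges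
  · exact p.adj_of_mem_edges hp
  · exact hFH ((switch_adj p).1 h |>.2 hp)

variable [Fintype V]

noncomputable def switchGain (F : SimpleGraph V) {v w : V} (p : H.Walk v w) (x : V) : ℤ :=
  ∑ y, if s(x, y) ∈ p.edges then (if F.Adj x y then -1 else 1) else 0

lemma deg_switch {v w : V} (p : H.Walk v w) (x : V) :
    (deg (switch F p) x : ℤ) = deg F x + switchGain F p x := by
  simp only [deg_eq_card_filter, card_filter, switchGain]
  push_cast
  rw [← sum_add_distrib]
  refine sum_congr rfl fun y _ => ?_
  have := switch_adj p (F := F) (x := x) (y := y)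
  by_cases hF : F.Adj x y <;> by_cases hp : s(x, y) ∈ p.edges <;> simp_all

lemma switchGain_of_altTrail {v w : V} {c : Bool} {p : H.Walk v w} (hp : AltTrail H F c p)
    (x : V) :
    switchGain F p x = (if x = w then 1 else 0) + (if x = v then (if c then -1 else 1) else 0) := by
  unfold switchGain
  induction p generalizing c with
  | @nil u =>
    obtain rfl : c = true := hp
    by_cases hx : x = u <;> simp [hx]
  | cons h q ih =>
    rename_i v₁ y₁ w₁
    obtain ⟨hnew, hF, hq⟩ := hp
    have hsplit : ∀ y, (if s(x, y) ∈ (SimpleGraph.Walk.cons h q).edges then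
          (if F.Adj x y then -1 else 1) else 0 : ℤ) =
        (if s(x, y) ∈ q.edges then (if F.Adj x y then -1 else 1) else 0) +
          (if s(x, y) = s(v₁, y₁) then (if F.Adj x y then -1 else 1) else 0) := fun y => by
      by_cases he : s(x, y) = s(v₁, y₁)
      · simp [he, hnew]
      · simp [he]
    rw [sum_congr rfl fun y _ => hsplit y, sum_add_distrib, ih hq, sum_ite_sym2_eq h.ne]
    have := h.ne
    have := F.adj_comm v₁ y₁
    grind

lemma deg_switch_of_altTrail {v w : V} {c : Bool} {p : H.Walk v w} (hp : AltTrail H F c p)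
    (x : V) :
    (deg (switch F p) x : ℤ) =
      deg F x + (if x = w then 1 else 0) + (if x = v then (if c then -1 else 1) else 0) := by
  rw [deg_switch, switchGain_of_altTrail hp, add_assoc]

end AlternatingTrails

section Sufficiency
variable {V : Type*} [Fintype V] {H F : SimpleGraph V} {a b : ℕ}

structure IsOptimalSubgraph (H : SimpleGraph V) (a b : ℕ) (F : SimpleGraph V) : Prop where
  le : F ≤ H
  deg_le : ∀ x, deg F x ≤ b
  sum_le : ∀ F' ≤ H, (∀ x, deg F' x ≤ b) → ∑ x, min a (deg F' x) ≤ ∑ x, min a (deg F x)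

lemma exists_isOptimalSubgraph (H : SimpleGraph V) (a b : ℕ) :
    ∃ F, IsOptimalSubgraph H a b F := by
  have : Nonempty {F : SimpleGraph V // F ≤ H ∧ ∀ x, deg F x ≤ b} :=
    ⟨⊥, bot_le, fun x => by simp [deg]⟩
  obtain ⟨⟨F, hFH, hFb⟩, hmax⟩ :=
    Finite.exists_max fun F : {F : SimpleGraph V // F ≤ H ∧ ∀ x, deg F x ≤ b} =>
      ∑ x, min a (deg F.1 x)
  exact ⟨F, ⟨hFH, hFb, fun F' hF'H hF'b => hmax ⟨F', hF'H, hF'b⟩⟩⟩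

lemma IsOptimalSubgraph.false_of_improves (hF : IsOptimalSubgraph H a b F) {F' : SimpleGraph V}
    (hF'H : F' ≤ H) (hF'b : ∀ x, deg F' x ≤ b)
    (hmono : ∀ x, deg F x ≤ deg F' x ∨ a ≤ deg F' x) {w : V}
    (hw : deg F w < a) (hlt : deg F w < deg F' w) : False := by
  refine (hF.sum_le F' hF'H hF'b).not_gt (sum_lt_sum (fun x _ => ?_) ⟨w, mem_univ w, ?_⟩)
  · have := hmono x
    omega
  · omega

lemma IsOptimalSubgraph.false_of_altTrail (hF : IsOptimalSubgraph H a b F) (hab : a < b)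
    {w v : V} (hw : deg F w < a) {c : Bool} {p : H.Walk v w} (hp : AltTrail H F c p)
    (hv : c = false ∧ deg F v < b ∨ c = true ∧ a < deg F v) : False := by
  have hdeg := deg_switch_of_altTrail hp
  have hb := hF.deg_le
  exact hF.false_of_improves (switch_le hF.le p) (fun x => by grind) (fun x => by grind) hw
    (by grind)

lemma IsOptimalSubgraph.deg_eq_of_altReach_false (hF : IsOptimalSubgraph H a b F) (hab : a < b)
    {w v : V} (hw : deg F w < a) (hv : AltReach H F w false v) : deg F v = b := by
  obtain ⟨p, hp⟩ := hv
  by_contra hne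
  exact hF.false_of_altTrail hab hw hp (.inl ⟨rfl, lt_of_le_of_ne (hF.deg_le v) hne⟩)

lemma IsOptimalSubgraph.deg_le_of_altReach_true (hF : IsOptimalSubgraph H a b F) (hab : a < b)
    {w v : V} (hw : deg F w < a) (hv : AltReach H F w true v) : deg F v ≤ a := by
  obtain ⟨p, hp⟩ := hv
  by_contra! hgt
  exact hF.false_of_altTrail hab hw hp (.inr ⟨rfl, hgt⟩)

variable {w : V}

lemma IsOptimalSubgraph.not_altReach_false (hF : IsOptimalSubgraph H a b F) (hab : a < b)
    (hw : deg F w < a) {v : V} (hv : AltReach H F w true v) : ¬AltReach H F w false v := by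
  intro hv'
  have := hF.deg_le_of_altReach_true hab hw hv
  have := hF.deg_eq_of_altReach_false hab hw hv'
  omega

lemma IsOptimalSubgraph.altReach_true_of_adj (hF : IsOptimalSubgraph H a b F) (hab : a < b)
    (hw : deg F w < a) {u x : V} (hu : AltReach H F w false u) (hux : F.Adj u x) :
    AltReach H F w true x :=
  (altReach_extend hu (hF.le hux) (by simpa using hux)).resolve_right
    fun hu' => hF.not_altReach_false hab hw hu' hu

lemma IsOptimalSubgraph.adj_of_altReach_true (hF : IsOptimalSubgraph H a b F) (hab : a < b)
    (hw : deg F w < a) {v x : V} (hv : AltReach H F w true v) (hvx : H.Adj v x)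
    (hx : ¬AltReach H F w false x) : F.Adj v x := by
  by_contra hF'
  rcases altReach_extend hv hvx (by simpa using hF') with hx' | hv'
  · exact hx hx'
  · exact hF.not_altReach_false hab hw hv hv'

lemma IsOptimalSubgraph.exists_lt_deficiency (hF : IsOptimalSubgraph H a b F) (hab : a < b)
    (hw : deg F w < a) :
    ∃ S : Set V, b * S.ncard < deficiency H a S := by
  set A : Finset V := {v | AltReach H F w false v}
  set D : Finset V := {v | AltReach H F w true v}
  have hA : ∀ {v}, v ∈ A ↔ AltReach H F w false v := by simp [A]
  have hD : ∀ {v}, v ∈ D ↔ AltReach H F w true v := by simp [D]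
  have hdegS : ∀ v ∈ D, a - degS H A v = (a - deg F v) + #{y ∈ A | F.Adj v y} := by
    intro v hv
    have heq : degS H A v = degS F A v := by
      rw [degS_eq_card_filter, degS_eq_card_filter]
      congr 1
      ext y
      simp only [mem_filter, mem_univ, true_and, mem_coe]
      exact ⟨fun h => ⟨hF.adj_of_altReach_true hab hw (hD.1 hv) h.1 (mt hA.2 h.2), h.2⟩,
        fun h => ⟨hF.le h.1, h.2⟩⟩
    have hsplit := deg_eq_card_adj_mem_add_degS F A v
    have := hF.deg_le_of_altReach_true hab hw (hD.1 hv)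
    rw [Finset.toFinset_coe] at hsplit
    omega
  have hcount : ∑ v ∈ D, #{y ∈ A | F.Adj v y} = b * #A := by
    rw [sum_card_adj_comm, mul_comm, ← smul_eq_mul, ← sum_const]
    refine sum_congr rfl fun u hu => ?_
    rw [← hF.deg_eq_of_altReach_false hab hw (hA.1 hu), deg_eq_card_filter]
    congr 1
    ext x
    simpa [hD] using hF.altReach_true_of_adj hab hw (hA.1 hu)
  refine ⟨A, ?_⟩
  calc b * (↑A : Set V).ncard < ∑ v ∈ D, (a - deg F v) + b * #A := by
        have := single_le_sum (fun v _ => Nat.zero_le (a - deg F v)) (hD.2 (altReach_self H F w))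
        rw [Set.ncard_coe_finset]
        omega
    _ = ∑ v ∈ D, (a - degS H A v) := by rw [sum_congr rfl hdegS, sum_add_distrib, hcount]
    _ ≤ deficiency H a A := sum_le_sum_of_subset fun v hv => by
        simpa [hA] using hF.not_altReach_false hab hw (hD.1 hv)

theorem hasABFactor_iff_forall_deficiency_le (hab : a < b) :
    HasABFactor H a b ↔ ∀ S : Set V, deficiency H a S ≤ b * S.ncard := by
  refine ⟨fun hf S => deficiency_le_of_hasABFactor hf S, fun h => ?_⟩
  obtain ⟨F, hF⟩ := exists_isOptimalSubgraph H a b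
  by_cases hdeg : ∀ x, a ≤ deg F x
  · exact ⟨F, hF.le, fun x => ⟨hdeg x, hF.deg_le x⟩⟩
  push Not at hdeg
  obtain ⟨w, hw⟩ := hdeg
  obtain ⟨S, hS⟩ := hF.exists_lt_deficiency hab hw
  exact absurd (h S) hS.not_ge

end Sufficiency

section DeleteEdge
variable {V : Type*} {G : SimpleGraph V} {u v : V}

noncomputable def rho (G : SimpleGraph V) (a : ℕ) (u v : V) (S : Set V) : ℕ :=
  let T' := Tset (G.deleteEdges {s(u, v)}) S a
  if u ∈ T' ∧ v ∈ T' then 2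
  else if (u ∈ T' ∧ v ∉ S ∧ v ∉ T') ∨ (v ∈ T' ∧ u ∉ S ∧ u ∉ T') then 1
  else 0

lemma rho_eq (G : SimpleGraph V) (a : ℕ) (u v : V) (S : Set V) :
    rho G a u v S =
      (if u ∈ Tset (G.deleteEdges {s(u, v)}) S a ∧ v ∉ S then 1 else 0) +
        (if v ∈ Tset (G.deleteEdges {s(u, v)}) S a ∧ u ∉ S then 1 else 0) := by
  grind [rho, Tset]

variable [Fintype V]

lemma degS_deleteEdges (huv : G.Adj u v) (S : Set V) (x : V) :
    degS G S x = degS (G.deleteEdges {s(u, v)}) S x +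
      ((if x = u then (if v ∈ S then 0 else 1) else 0) +
        (if x = v then (if u ∈ S then 0 else 1) else 0)) := by
  rw [degS_eq_card_filter, degS_eq_card_filter, card_filter, card_filter,
    ← sum_ite_sym2_eq huv.ne x fun y => if y ∈ S then 0 else 1, ← sum_add_distrib]
  refine sum_congr rfl fun y _ => ?_
  by_cases he : s(x, y) = s(u, v)
  · have hxy : G.Adj x y := by rw [← SimpleGraph.mem_edgeSet, he]; exact huv
    by_cases hy : y ∈ S <;> simp [he, hxy, hy]
  · simp [he]

lemma sub_degS_deleteEdges {a : ℕ} (ha : 1 ≤ a) (huv : G.Adj u v) {S : Set V} {x : V}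
    (hx : x ∉ S) :
    a - degS (G.deleteEdges {s(u, v)}) S x = a - degS G S x +
      (if x = u then (if u ∈ Tset (G.deleteEdges {s(u, v)}) S a ∧ v ∉ S then 1 else 0)
        else 0) +
      (if x = v then (if v ∈ Tset (G.deleteEdges {s(u, v)}) S a ∧ u ∉ S then 1 else 0)
        else 0) := by
  have hd := degS_deleteEdges huv S x
  have := huv.ne
  grind [Tset]

lemma deficiency_deleteEdges {a : ℕ} (ha : 1 ≤ a) (huv : G.Adj u v) (S : Set V) :
    deficiency (G.deleteEdges {s(u, v)}) a S = deficiency G a S + rho G a u v S := by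
  have hT : ∀ {x}, x ∈ Tset (G.deleteEdges {s(u, v)}) S a → x ∉ S := fun h => h.1
  rw [deficiency, sum_congr rfl fun x hx => sub_degS_deleteEdges ha huv (by simpa using hx),
    sum_add_distrib, sum_add_distrib, sum_ite_eq', sum_ite_eq', ← deficiency, add_assoc, rho_eq]
  by_cases hu : u ∈ Tset (G.deleteEdges {s(u, v)}) S a <;>
    by_cases hv : v ∈ Tset (G.deleteEdges {s(u, v)}) S a <;> simp [hu, hv, hT]

end DeleteEdge

theorem stmt_11 {V : Type*} [Fintype V] (G : SimpleGraph V) (a b : ℕ)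
    (ha : 1 ≤ a) (hab : a < b) (u v : V) (huv : G.Adj u v) :
    HasABFactor (G.deleteEdges {s(u, v)}) a b ↔
      ∀ S : Set V,
        a * (Tset G S a).ncard +
            (let T' := Tset (G.deleteEdges {s(u, v)}) S a
             if u ∈ T' ∧ v ∈ T' then 2
             else if (u ∈ T' ∧ v ∉ S ∧ v ∉ T') ∨ (v ∈ T' ∧ u ∉ S ∧ u ∉ T') then 1
             else 0) ≤
          b * S.ncard + dSum G S (Tset G S a) := by
  rw [hasABFactor_iff_forall_deficiency_le hab]
  refine forall_congr' fun S => ?_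
  rw [deficiency_deleteEdges ha huv, mul_ncard_Tset_eq]
  change _ ↔ _ + rho G a u v S ≤ _
  omega
end

section
/- Let a ≥ 2 and let H be a graph with a vertex partition S_1, ..., S_{a−1} such that d_H(x) ≤ j for every x ∈ S_j (1 ≤ j ≤ a−1). Then there exist a maximal independent set I and a vertex cover C of H with I ∩ C = ∅ and Σ_{j=1}^{a−1} (a−j)c_j ≤ Σ_{j=1}^{a−1} j(a−j)i_j, where c_j = |S_j ∩ C| and i_j = |S_j ∩ I|. -/
open Finset
open scoped Classical

/-- `I` is an independent set of `G`. -/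
def IsIndep {W : Type*} (G : SimpleGraph W) (I : Set W) : Prop :=
  ∀ ⦃x⦄, x ∈ I → ∀ ⦃y⦄, y ∈ I → ¬ G.Adj x y

/-- `I` is a maximal independent set of `G`. -/
def IsMaxIndep {W : Type*} (G : SimpleGraph W) (I : Set W) : Prop :=
  IsIndep G I ∧ ∀ J, IsIndep G J → I ⊆ J → J = I

/-- `C` is a vertex cover of `G`. -/
def IsCover {W : Type*} (G : SimpleGraph W) (C : Set W) : Prop :=
  ∀ ⦃x y⦄, G.Adj x y → x ∈ C ∨ y ∈ C

/-! Let `ℓ x` be the index `j` with `x ∈ S_j`, so `d(x) ≤ ℓ x`. Repeatedly putting a vertex of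
least level into `I` and discarding its neighbours yields an independent set `I` in which every
vertex outside `I` has a neighbour in `I` of no larger level; hence `I` is maximal and its
complement `C` is a cover. Charge each `x ∈ C` to such a neighbour `y`: then `a - ℓ x ≤ a - ℓ y`,
and `y` is charged at most `d(y) ≤ ℓ y` times. -/

section Domination

variable {V : Type*} (H : SimpleGraph V)

theorem isCover_compl_of_isIndep {I : Set V} (hI : IsIndep H I) : IsCover H Iᶜ := by
  intro x y hxy
  by_contra! h
  simp only [Set.mem_compl_iff, not_not] at h
  exact hI h.1 h.2 hxy

theorem isMaxIndep_of_forall_exists_adj {I : Set V} (hI : IsIndep H I)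
    (hdom : ∀ x ∉ I, ∃ y ∈ I, H.Adj x y) : IsMaxIndep H I := by
  refine ⟨hI, fun J hJ hIJ => (hIJ.antisymm fun x hxJ => ?_).symm⟩
  by_contra hxI
  obtain ⟨y, hyI, hxy⟩ := hdom x hxI
  exact hJ hxJ (hIJ hyI) hxy

theorem exists_isIndep_forall_exists_adj_le {α : Type*} [LinearOrder α] (ℓ : V → α)
    (S : Finset V) :
    ∃ I ⊆ S, IsIndep H (I : Set V) ∧ ∀ x ∈ S, x ∉ I → ∃ y ∈ I, H.Adj x y ∧ ℓ y ≤ ℓ x := by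
  induction S using Finset.strongInduction with
  | H S ih =>
    rcases S.eq_empty_or_nonempty with rfl | hS
    · exact ⟨∅, subset_rfl, fun x hx => absurd hx (by simp), by simp⟩
    obtain ⟨v, hvS, hv⟩ := S.exists_min_image ℓ hS
    set S' := S.filter fun x => x ≠ v ∧ ¬ H.Adj v x
    obtain ⟨I', hI'S', hI', hdom'⟩ := ih S' (Finset.filter_ssubset.2 ⟨v, hvS, by simp⟩)
    have hI'v : ∀ x ∈ I', x ≠ v ∧ ¬ H.Adj v x := fun x hx => (Finset.mem_filter.1 (hI'S' hx)).2
    refine ⟨insert v I', Finset.insert_subset hvS (hI'S'.trans (Finset.filter_subset _ _)),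
      ?_, fun x hxS hxI => ?_⟩
    · intro x hx y hy hxy
      simp only [Finset.coe_insert, Set.mem_insert_iff, Finset.mem_coe] at hx hy
      rcases hx with rfl | hx <;> rcases hy with rfl | hy
      · exact H.loopless.irrefl _ hxy
      · exact (hI'v y hy).2 hxy
      · exact (hI'v x hx).2 hxy.symm
      · exact hI' hx hy hxy
    rw [Finset.mem_insert, not_or] at hxI
    by_cases hvx : H.Adj v x
    · exact ⟨v, Finset.mem_insert_self _ _, hvx.symm, hv x hxS⟩
    obtain ⟨y, hyI', hxy, hyx⟩ :=
      hdom' x (Finset.mem_filter.2 ⟨hxS, hxI.1, hvx⟩) hxI.2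
    exact ⟨y, Finset.mem_insert_of_mem hyI', hxy, hyx⟩

theorem deg_eq_card_neighborFinset [Fintype V] (v : V) :
    deg H v = (H.neighborFinset v).card := by
  rw [deg, SimpleGraph.neighborFinset_def, Set.ncard_eq_toFinset_card']

theorem sum_compl_le_sum_deg_smul [Fintype V] {M : Type*} [AddCommMonoid M] [PartialOrder M]
    [IsOrderedAddMonoid M] [CanonicallyOrderedAdd M] (g : V → M) (I : Finset V)
    (hdom : ∀ x ∉ I, ∃ y ∈ I, H.Adj x y ∧ g x ≤ g y) :
    ∑ x ∈ Iᶜ, g x ≤ ∑ y ∈ I, deg H y • g y := by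
  choose! f hfI hfadj hfg using hdom
  have hmaps : ∀ x ∈ Iᶜ, f x ∈ I := fun x hx => hfI x (Finset.mem_compl.1 hx)
  have hfiber : ∀ y ∈ I, (Iᶜ.filter fun x => f x = y).card ≤ deg H y := by
    intro y _
    rw [deg_eq_card_neighborFinset]
    refine Finset.card_le_card fun x hx => ?_
    obtain ⟨hxI, rfl⟩ := Finset.mem_filter.1 hx
    exact (H.mem_neighborFinset _ x).2 (hfadj x (Finset.mem_compl.1 hxI)).symm
  calc ∑ x ∈ Iᶜ, g x
      ≤ ∑ x ∈ Iᶜ, g (f x) := Finset.sum_le_sum fun x hx => hfg x (Finset.mem_compl.1 hx)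
    _ = ∑ y ∈ I, (Iᶜ.filter fun x => f x = y).card • g y := by
      rw [← Finset.sum_fiberwise_of_maps_to' hmaps]
      simp only [Finset.sum_const]
    _ ≤ ∑ y ∈ I, deg H y • g y :=
      Finset.sum_le_sum fun y hy => nsmul_le_nsmul_left zero_le (hfiber y hy)

end Domination

theorem sum_mul_ncard_inter_eq_sum {V ι : Type*} {T : Finset ι} {S : ι → Set V}
    (hpart : ∀ x, ∃! j, j ∈ T ∧ x ∈ S j) (ℓ : V → ι) (hℓ : ∀ x, ℓ x ∈ T ∧ x ∈ S (ℓ x))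
    (g : ι → ℕ) (A : Finset V) :
    ∑ j ∈ T, g j * (S j ∩ A).ncard = ∑ x ∈ A, g (ℓ x) := by
  rw [← Finset.sum_fiberwise_of_maps_to' fun x _ => (hℓ x).1]
  refine Finset.sum_congr rfl fun j hj => ?_
  have hfiber : S j ∩ A = ↑(A.filter fun x => ℓ x = j) := by
    ext x
    simp only [Set.mem_inter_iff, Finset.coe_filter, Set.mem_ofPred_eq, Finset.mem_coe]
    constructor
    · rintro ⟨hxS, hxA⟩
      exact ⟨hxA, (hpart x).unique (hℓ x) ⟨hj, hxS⟩⟩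
    · rintro ⟨hxA, rfl⟩
      exact ⟨(hℓ x).2, hxA⟩
  rw [hfiber, Set.ncard_coe_finset, Finset.sum_const, smul_eq_mul, mul_comm]

theorem stmt_12_general {V : Type*} [Fintype V] (H : SimpleGraph V) (a : ℕ)
    (Sj : ℕ → Set V)
    (hpart : ∀ x : V, ∃! j, j ∈ Finset.Icc 1 (a - 1) ∧ x ∈ Sj j)
    (hdeg : ∀ j ∈ Finset.Icc 1 (a - 1), ∀ x ∈ Sj j, deg H x ≤ j) :
    ∃ I C : Set V, IsMaxIndep H I ∧ IsCover H C ∧ I ∩ C = ∅ ∧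
      ∑ j ∈ Finset.Icc 1 (a - 1), (a - j) * (Sj j ∩ C).ncard ≤
        ∑ j ∈ Finset.Icc 1 (a - 1), j * (a - j) * (Sj j ∩ I).ncard := by
  choose ℓ hℓ using fun x => (hpart x).exists
  obtain ⟨I, -, hI, hdom⟩ := exists_isIndep_forall_exists_adj_le H ℓ Finset.univ
  have hdom' : ∀ x ∉ I, ∃ y ∈ I, H.Adj x y ∧ ℓ y ≤ ℓ x := fun x => hdom x (Finset.mem_univ x)
  refine ⟨I, ↑Iᶜ, isMaxIndep_of_forall_exists_adj H hI fun x hx => ?_, ?_, by simp, ?_⟩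
  · obtain ⟨y, hy, hxy, -⟩ := hdom' x hx
    exact ⟨y, hy, hxy⟩
  · simpa using isCover_compl_of_isIndep H hI
  rw [sum_mul_ncard_inter_eq_sum hpart ℓ hℓ, sum_mul_ncard_inter_eq_sum hpart ℓ hℓ]
  calc ∑ x ∈ Iᶜ, (a - ℓ x)
      ≤ ∑ y ∈ I, deg H y • (a - ℓ y) := sum_compl_le_sum_deg_smul H _ I fun x hx => by
        obtain ⟨y, hy, hxy, hyx⟩ := hdom' x hx
        exact ⟨y, hy, hxy, Nat.sub_le_sub_left hyx a⟩
    _ ≤ ∑ y ∈ I, ℓ y * (a - ℓ y) := Finset.sum_le_sum fun y _ =>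
        Nat.mul_le_mul_right _ (hdeg _ (hℓ y).1 y (hℓ y).2)

theorem stmt_12 {V : Type*} [Fintype V] (H : SimpleGraph V) (a : ℕ) (ha : 2 ≤ a)
    (Sj : ℕ → Set V)
    (hpart : ∀ x : V, ∃! j, j ∈ Finset.Icc 1 (a - 1) ∧ x ∈ Sj j)
    (hdeg : ∀ j ∈ Finset.Icc 1 (a - 1), ∀ x ∈ Sj j, deg H x ≤ j) :
    ∃ I C : Set V, IsMaxIndep H I ∧ IsCover H C ∧ I ∩ C = ∅ ∧
      ∑ j ∈ Finset.Icc 1 (a - 1), (a - j) * (Sj j ∩ C).ncard ≤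
        ∑ j ∈ Finset.Icc 1 (a - 1), j * (a - j) * (Sj j ∩ I).ncard :=
  stmt_12_general H a Sj hpart hdeg
end

section
/- Let 1 ≤ a < b be integers and 2 ≤ k ≤ b, n ≥ 1. If a graph G satisfies δ(G) ≥ a + n and I(G) ≥ a − 1 + (a + kn − 1)/b, then for every subset S ⊆ V(G) for which T = {x ∈ V(G)−S : d_{G−S}(x) ≤ a−1} is nonempty, one has b|S| − a|T| + d_{G−S}(T) ≥ kn. -/
open Finset
open scoped Classical

lemma build {V : Type*} [Fintype V] (G : SimpleGraph V) (S : Set V) (a : ℕ) :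
    ∀ (U : Finset V), (∀ y ∈ U, y ∈ Tset G S a) → ∃ (r : ℕ) (x : Fin r → V),
      (∀ i, x i ∈ U) ∧ (∀ i j, i ≠ j → x i ≠ x j ∧ ¬ G.Adj (x i) (x j)) ∧
      a * U.card + ∑ i, degS G S (x i) * (degS G S (x i) + 1)
        ≤ (∑ y ∈ U, degS G S y) + ∑ i, a * (degS G S (x i) + 1) := by
  intro U
  induction U using Finset.strongInduction with
  | _ U IH =>
    intro hU
    rcases U.eq_empty_or_nonempty with rfl | hne
    · exact ⟨0, Fin.elim0, fun i => i.elim0, fun i => i.elim0, by simp⟩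
    obtain ⟨x₀, hx₀U, hmin⟩ := U.exists_min_image (degS G S) hne
    set d₀ := degS G S x₀ with hd₀
    have hd₀a : d₀ ≤ a := by
      have := (hU x₀ hx₀U).2
      omega
    set R : Finset V := U.filter (fun y => y = x₀ ∨ G.Adj x₀ y) with hR
    have hx₀R : x₀ ∈ R := by simp [hR, hx₀U]
    have hRU : R ⊆ U := Finset.filter_subset _ _
    have hRcard : R.card ≤ d₀ + 1 := by
      have hsub : R ⊆ insert x₀ (Set.toFinite (G.neighborSet x₀ \ S)).toFinset := by
        intro y hy
        rw [hR, Finset.mem_filter] at hy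
        rcases hy.2 with rfl | hadj
        · exact Finset.mem_insert_self _ _
        · refine Finset.mem_insert_of_mem ?_
          rw [Set.Finite.mem_toFinset]
          exact ⟨hadj, (hU y hy.1).1⟩
      calc R.card ≤ _ := Finset.card_le_card hsub
        _ ≤ (Set.toFinite (G.neighborSet x₀ \ S)).toFinset.card + 1 :=
          Finset.card_insert_le _ _
        _ = d₀ + 1 := by
          rw [hd₀, degS, Set.ncard_eq_toFinset_card _ (Set.toFinite _)]
    have hU'ss : U \ R ⊂ U := by
      refine Finset.sdiff_ssubset ?_ ⟨x₀, hx₀R⟩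
      exact hRU
    obtain ⟨r, x, hxm, hdist, hineq⟩ := IH (U \ R) hU'ss (fun y hy => hU y (Finset.mem_sdiff.mp hy).1)
    refine ⟨r + 1, Fin.cons x₀ x, ?_, ?_, ?_⟩
    · intro i
      induction i using Fin.cases with
      | zero => simpa using hx₀U
      | succ j => simpa using (Finset.mem_sdiff.mp (hxm j)).1
    · have key : ∀ j, x₀ ≠ x j ∧ ¬ G.Adj x₀ (x j) := by
        intro j
        have hj := hxm j
        rw [Finset.mem_sdiff, hR, Finset.mem_filter] at hj
        have := hj.2
        push_neg at this
        exact ⟨(this hj.1).1.symm, (this hj.1).2⟩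
      intro i j hij
      induction i using Fin.cases with
      | zero =>
        induction j using Fin.cases with
        | zero => exact absurd rfl hij
        | succ j' => simpa using key j'
      | succ i' =>
        induction j using Fin.cases with
        | zero =>
          have := key i'
          simp only [Fin.cons_zero, Fin.cons_succ]
          exact ⟨(this.1).symm, fun h => this.2 h.symm⟩
        | succ j' =>
          have hij' : i' ≠ j' := by
            intro h; exact hij (by rw [h])
          simpa using hdist i' j' hij'
    · rw [Fin.sum_univ_succ, Fin.sum_univ_succ]
      simp only [Fin.cons_zero, Fin.cons_succ]
      have hcard : U.card = (U \ R).card + R.card := (Finset.card_sdiff_add_card_eq_card hRU).symm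
      have hsum : (∑ y ∈ U \ R, degS G S y) + ∑ y ∈ R, degS G S y = ∑ y ∈ U, degS G S y :=
        Finset.sum_sdiff hRU
      have hRsum : R.card * d₀ ≤ ∑ y ∈ R, degS G S y := by
        have := Finset.card_nsmul_le_sum R (degS G S) d₀ (fun y hy => hmin y (hRU hy))
        simpa [smul_eq_mul] using this
      have kk : a * R.card + d₀ * (d₀ + 1) ≤ d₀ * R.card + a * (d₀ + 1) := by
        have h3 : (a - d₀) * R.card ≤ (a - d₀) * (d₀ + 1) := Nat.mul_le_mul_left _ hRcard
        have h4 : d₀ * R.card + (a - d₀) * R.card = a * R.card := by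
          rw [← Nat.add_mul, Nat.add_sub_cancel' (by omega : d₀ ≤ a)]
        have h5 : d₀ * (d₀ + 1) + (a - d₀) * (d₀ + 1) = a * (d₀ + 1) := by
          rw [← Nat.add_mul, Nat.add_sub_cancel' (by omega : d₀ ≤ a)]
        linarith
      have hexp : a * U.card = a * (U \ R).card + a * R.card := by
        rw [hcard, Nat.mul_add]
      linarith

set_option maxHeartbeats 2000000 in
theorem stmt_13 {V : Type*} [Fintype V] (G : SimpleGraph V) (a b k n : ℕ)
    (ha : 1 ≤ a) (hab : a < b) (hk : 2 ≤ k) (hkb : k ≤ b) (hn : 1 ≤ n)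
    (hdeg : ∀ v : V, a + n ≤ deg G v)
    (htough : (a : ℝ) - 1 + ((a : ℝ) + k * n - 1) / b ≤ isoT G) :
    ∀ S : Set V, (Tset G S a).Nonempty →
      a * (Tset G S a).ncard + k * n ≤ b * S.ncard + dSum G S (Tset G S a) := by
  intro S hT
  have hTfin : (Tset G S a).Finite := Set.toFinite _
  set Tf : Finset V := hTfin.toFinset with hTfdef
  have hmemTf : ∀ y, y ∈ Tf ↔ y ∈ Tset G S a := fun y => Set.Finite.mem_toFinset _
  have hTcard : (Tset G S a).ncard = Tf.card := Set.ncard_eq_toFinset_card _ hTfin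
  have hdsum : dSum G S (Tset G S a) = ∑ y ∈ Tf, degS G S y := by
    rw [dSum, ← Set.Finite.coe_toFinset hTfin, finsum_mem_coe_finset]
  obtain ⟨r, x, hxm, hdist, hineq⟩ := build G S a Tf (fun y hy => (hmemTf y).1 hy)
  have hxT : ∀ i, x i ∈ Tset G S a := fun i => (hmemTf _).1 (hxm i)
  have hdle : ∀ i, degS G S (x i) + 1 ≤ a := by
    intro i
    have := (hxT i).2
    omega
  have hSfin : S.Finite := Set.toFinite _
  have hSge : ∀ i, a + n ≤ degS G S (x i) + S.ncard := by
    intro i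
    have h1 := hdeg (x i)
    have h2 : (G.neighborSet (x i) ∩ S).ncard + (G.neighborSet (x i) \ S).ncard
        = (G.neighborSet (x i)).ncard :=
      Set.ncard_inter_add_ncard_diff_eq_ncard _ _ (Set.toFinite _)
    have h3 : (G.neighborSet (x i) ∩ S).ncard ≤ S.ncard :=
      Set.ncard_le_ncard Set.inter_subset_right hSfin
    rw [deg] at h1
    rw [degS]
    omega
  have hTfpos : 0 < Tf.card := by
    obtain ⟨y, hy⟩ := hT
    exact Finset.card_pos.mpr ⟨y, (hmemTf y).2 hy⟩
  rw [hTcard, hdsum]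
  rcases r with _ | _ | r
  · -- r = 0 : impossible
    exfalso
    simp only [Finset.univ_eq_empty, Finset.sum_empty, add_zero] at hineq
    have hub : ∑ y ∈ Tf, degS G S y ≤ Tf.card * (a - 1) := by
      have := Finset.sum_le_card_nsmul Tf (degS G S) (a - 1)
        (fun y hy => ((hmemTf y).1 hy).2)
      simpa [smul_eq_mul] using this
    obtain ⟨a', rfl⟩ : ∃ a', a = a' + 1 := ⟨a - 1, by omega⟩
    simp only [Nat.add_sub_cancel] at hub
    nlinarith
  · -- r = 1
    have h1 := hSge 0
    have h2 := hdle 0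
    have hineq1 : a * Tf.card + degS G S (x 0) * (degS G S (x 0) + 1)
        ≤ (∑ y ∈ Tf, degS G S y) + a * (degS G S (x 0) + 1) := by
      simpa [Fin.sum_univ_one] using hineq
    have key : a * (degS G S (x 0) + 1) + k * n
        ≤ b * S.ncard + degS G S (x 0) * (degS G S (x 0) + 1) := by
      zify
      have h1' : (a : ℤ) + n ≤ (degS G S (x 0) : ℤ) + S.ncard := by exact_mod_cast h1
      have h2' : (degS G S (x 0) : ℤ) + 1 ≤ a := by exact_mod_cast h2
      have hab' : (a : ℤ) < b := by exact_mod_cast hab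
      have hkb' : (k : ℤ) ≤ b := by exact_mod_cast hkb
      have hn' : (1 : ℤ) ≤ n := by exact_mod_cast hn
      nlinarith [mul_le_mul_of_nonneg_left h1' (by positivity : (0:ℤ) ≤ (b:ℤ)),
        mul_nonneg (by linarith : (0:ℤ) ≤ (b:ℤ) - k) (by linarith : (0:ℤ) ≤ (n:ℤ)),
        mul_nonneg (by linarith : (0:ℤ) ≤ (b:ℤ) - (degS G S (x 0) + 1))
          (by linarith : (0:ℤ) ≤ (a:ℤ) - degS G S (x 0))]
    linarith
  · -- r ≥ 2
    have hr2 : 2 ≤ r + 1 + 1 := by omega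
    have hGne : G ≠ ⊤ := by
      intro hG
      have h01 : (0 : Fin (r+1+1)) ≠ 1 := by
        simp [Fin.ext_iff]
      obtain ⟨hne', hnadj⟩ := hdist 0 1 h01
      rw [hG] at hnadj
      exact hnadj (by simpa using hne')
    have hinj : Function.Injective x := by
      intro i j hij
      by_contra hne
      exact (hdist i j hne).1 hij
    obtain ⟨NF, hNFdef⟩ : ∃ NF : Fin (r+1+1) → Finset V,
        NF = fun i => (Set.toFinite (G.neighborSet (x i) \ S)).toFinset := ⟨_, rfl⟩
    have hNFcard : ∀ i, (NF i).card = degS G S (x i) := by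
      intro i
      simp only [hNFdef]
      rw [degS, Set.ncard_eq_toFinset_card _ (Set.toFinite _)]
    obtain ⟨Sf, hSfdef⟩ : ∃ Sf : Finset V, Sf = hSfin.toFinset ∪ Finset.univ.biUnion NF :=
      ⟨_, rfl⟩
    have hS'card : (↑Sf : Set V).ncard ≤ S.ncard + ∑ i, degS G S (x i) := by
      rw [Set.ncard_coe_finset, hSfdef]
      calc (hSfin.toFinset ∪ Finset.univ.biUnion NF).card
            ≤ hSfin.toFinset.card + (Finset.univ.biUnion NF).card :=
            Finset.card_union_le _ _
        _ ≤ S.ncard + ∑ i, (NF i).card := by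
            rw [Set.ncard_eq_toFinset_card _ hSfin]
            exact Nat.add_le_add_left Finset.card_biUnion_le _
        _ = S.ncard + ∑ i, degS G S (x i) := by
            simp only [hNFcard]
    have hxnotS' : ∀ i, x i ∉ (↑Sf : Set V) := by
      intro i hi
      rw [hSfdef] at hi
      simp only [Finset.coe_union, Set.mem_union, Finset.mem_coe,
        Set.Finite.mem_toFinset, Finset.mem_biUnion, Finset.mem_univ, true_and] at hi
      rcases hi with hi | ⟨j, hj⟩
      · exact (hxT i).1 hi
      · simp only [hNFdef] at hj
        simp only [Set.Finite.mem_toFinset, Set.mem_diff, SimpleGraph.mem_neighborSet] at hj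
        rcases eq_or_ne j i with rfl | hji
        · exact G.irrefl hj.1
        · exact (hdist j i hji).2 hj.1
    have hxiso : ∀ i, degS G (↑Sf) (x i) = 0 := by
      intro i
      rw [degS, Set.ncard_eq_zero (Set.toFinite _)]
      ext y
      simp only [Set.mem_diff, SimpleGraph.mem_neighborSet, Set.mem_empty_iff_false, iff_false,
        not_and, not_not]
      intro hadj
      by_contra hy
      apply hy
      rw [hSfdef]
      simp only [Finset.coe_union, Set.mem_union, Finset.mem_coe, Set.Finite.mem_toFinset,
        Finset.mem_biUnion, Finset.mem_univ, true_and]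
      by_cases hyS : y ∈ S
      · exact Or.inl hyS
      · refine Or.inr ⟨i, ?_⟩
        simp only [hNFdef]
        simp only [Set.Finite.mem_toFinset, Set.mem_diff, SimpleGraph.mem_neighborSet]
        exact ⟨hadj, hyS⟩
    have hr_le : r + 1 + 1 ≤ nIso G (↑Sf) := by
      have himg : (Finset.univ.image x).card = r + 1 + 1 := by
        rw [Finset.card_image_of_injective _ hinj, Finset.card_univ, Fintype.card_fin]
      have hsub : (↑(Finset.univ.image x) : Set V) ⊆ {y | y ∉ (↑Sf : Set V) ∧ degS G (↑Sf) y = 0} := by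
        intro y hy
        simp only [Finset.coe_image, Set.mem_image, Finset.mem_coe, Finset.mem_univ] at hy
        obtain ⟨i, _, rfl⟩ := hy
        exact ⟨hxnotS' i, hxiso i⟩
      calc (r + 1 + 1) = (↑(Finset.univ.image x) : Set V).ncard := by
            rw [Set.ncard_coe_finset, himg]
        _ ≤ _ := Set.ncard_le_ncard hsub (Set.toFinite _)
    -- toughness
    have hb0 : (0:ℝ) < b := by
      have : 0 < b := by omega
      exact_mod_cast this
    have hniso2 : 2 ≤ nIso G (↑Sf) := le_trans hr2 hr_le
    have hniso0 : (0:ℝ) < (nIso G (↑Sf) : ℝ) := by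
      have : 0 < nIso G (↑Sf) := by omega
      exact_mod_cast this
    have hbdd : BddBelow {z : ℝ | ∃ S₀ : Set V, 2 ≤ nIso G S₀ ∧ z = (S₀.ncard : ℝ) / (nIso G S₀ : ℝ)} := by
      refine ⟨0, fun z hz => ?_⟩
      obtain ⟨S₀, _, rfl⟩ := hz
      positivity
    have hmem' : ((Sf.card : ℝ) / (nIso G (↑Sf) : ℝ)) ∈
        {z : ℝ | ∃ S₀ : Set V, 2 ≤ nIso G S₀ ∧ z = (S₀.ncard : ℝ) / (nIso G S₀ : ℝ)} :=
      ⟨↑Sf, hniso2, by rw [Set.ncard_coe_finset]⟩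
    have htough' : (a:ℝ) - 1 + ((a:ℝ) + k*n - 1)/b ≤ (Sf.card : ℝ) / (nIso G (↑Sf) : ℝ) := by
      refine le_trans htough ?_
      rw [isoT, if_neg hGne]
      exact csInf_le hbdd hmem'
    have hrpos : (0:ℝ) < ((r+1+1 : ℕ) : ℝ) := by
      have : 0 < r + 1 + 1 := by omega
      exact_mod_cast this
    have hchain : (Sf.card : ℝ) / (nIso G (↑Sf) : ℝ)
        ≤ ((S.ncard : ℝ) + ∑ i, (degS G S (x i) : ℝ)) / ((r+1+1 : ℕ) : ℝ) := by
      have h1 : (Sf.card : ℝ) ≤ (S.ncard : ℝ) + ∑ i, (degS G S (x i) : ℝ) := by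
        have := hS'card
        rw [Set.ncard_coe_finset] at this
        exact_mod_cast this
      have h2 : ((r+1+1 : ℕ) : ℝ) ≤ (nIso G (↑Sf) : ℝ) := Nat.cast_le.mpr hr_le
      have h0 : (0:ℝ) ≤ (S.ncard : ℝ) + ∑ i, (degS G S (x i) : ℝ) := by positivity
      exact div_le_div₀ h0 h1 hrpos h2
    have hQ : ((a:ℝ) - 1 + ((a:ℝ) + k*n - 1)/b) * ((r+1+1 : ℕ) : ℝ) ≤ (S.ncard : ℝ) + ∑ i, (degS G S (x i) : ℝ) := by
      have := htough'.trans hchain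
      rwa [← le_div_iff₀ hrpos]
    have hQb : ((a:ℝ)-1)*b*((r+1+1 : ℕ) : ℝ) + ((a:ℝ)+k*n-1)*((r+1+1 : ℕ) : ℝ)
        ≤ b*(S.ncard:ℝ) + b*∑ i, (degS G S (x i) : ℝ) := by
      have h := mul_le_mul_of_nonneg_right hQ hb0.le
      have hexp : (((a:ℝ) - 1 + ((a:ℝ) + k*n - 1)/b) * ((r+1+1 : ℕ) : ℝ)) * b
          = ((a:ℝ)-1)*b*((r+1+1 : ℕ) : ℝ) + ((a:ℝ)+k*n-1)*((r+1+1 : ℕ) : ℝ) := by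
        field_simp
      rw [hexp] at h
      nlinarith [h]
    have hper : ∀ i : Fin (r+1+1), (b:ℝ)*(degS G S (x i) : ℝ)
        + ((a:ℝ) - (degS G S (x i) : ℝ))*((degS G S (x i) : ℝ)+1) ≤ ((a:ℝ)-1)*b + a := by
      intro i
      have h2 : (degS G S (x i) : ℝ) + 1 ≤ a := by exact_mod_cast hdle i
      have h3 : (a:ℝ) < b := by exact_mod_cast hab
      have h4 : (0:ℝ) ≤ (degS G S (x i) : ℝ) := by positivity
      nlinarith [mul_nonneg (by linarith : (0:ℝ) ≤ (b:ℝ) - (degS G S (x i) : ℝ))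
        (by linarith : (0:ℝ) ≤ (a:ℝ) - 1 - (degS G S (x i) : ℝ))]
    have hsumper : ∑ i : Fin (r+1+1), ((b:ℝ)*(degS G S (x i) : ℝ)
        + ((a:ℝ) - (degS G S (x i) : ℝ))*((degS G S (x i) : ℝ)+1))
        ≤ ((r+1+1 : ℕ) : ℝ) * (((a:ℝ)-1)*b + a) := by
      have := Finset.sum_le_card_nsmul Finset.univ (fun i : Fin (r+1+1) => (b:ℝ)*(degS G S (x i) : ℝ)
        + ((a:ℝ) - (degS G S (x i) : ℝ))*((degS G S (x i) : ℝ)+1)) (((a:ℝ)-1)*b + a) (fun i _ => hper i)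
      simp only [Finset.card_univ, Fintype.card_fin, nsmul_eq_mul] at this
      push_cast at this ⊢
      linarith
    have hsplit : ∑ i : Fin (r+1+1), ((b:ℝ)*(degS G S (x i) : ℝ)
          + ((a:ℝ) - (degS G S (x i) : ℝ))*((degS G S (x i) : ℝ)+1))
        = b*∑ i, (degS G S (x i) : ℝ)
          + ∑ i : Fin (r+1+1), ((a:ℝ) - (degS G S (x i) : ℝ))*((degS G S (x i) : ℝ)+1) := by
      rw [Finset.sum_add_distrib, Finset.mul_sum]
    have hterm : ∑ i : Fin (r+1+1), ((a:ℝ) - (degS G S (x i) : ℝ))*((degS G S (x i) : ℝ)+1)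
        = ∑ i : Fin (r+1+1), (a:ℝ)*((degS G S (x i) : ℝ)+1)
          - ∑ i : Fin (r+1+1), (degS G S (x i) : ℝ)*((degS G S (x i) : ℝ)+1) := by
      rw [← Finset.sum_sub_distrib]
      exact Finset.sum_congr rfl fun i _ => by ring
    have hineqR : (a:ℝ)*Tf.card + ∑ i : Fin (r+1+1), (degS G S (x i) : ℝ)*((degS G S (x i) : ℝ)+1)
        ≤ (∑ y ∈ Tf, (degS G S y : ℝ)) + ∑ i : Fin (r+1+1), (a:ℝ)*((degS G S (x i) : ℝ)+1) := by
      exact_mod_cast hineq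
    have hkn2 : (2:ℝ) ≤ (k:ℝ)*(n:ℝ) := by
      have : 2 ≤ k * n := le_trans hk (Nat.le_mul_of_pos_right k hn)
      exact_mod_cast this
    have hr2R : (2:ℝ) ≤ ((r+1+1 : ℕ) : ℝ) := by exact_mod_cast hr2
    have hrkn : (k:ℝ)*(n:ℝ) + ((k:ℝ)*(n:ℝ) - 2) ≤ ((r+1+1 : ℕ) : ℝ)*((k:ℝ)*(n:ℝ) - 1) := by
      nlinarith
    have final : ((a * Tf.card + k*n : ℕ) : ℝ) ≤ ((b * S.ncard + ∑ y ∈ Tf, degS G S y : ℕ) : ℝ) := by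
      push_cast
      nlinarith [hQb, hsumper, hsplit, hterm, hineqR, hrkn, hkn2]
    exact_mod_cast final
end
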